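/- arXiv:1509.06231 — 10 statements merged into one kernel-verified Lean document; each statement's English description precedes it below -/
import Mathlib

section
/- Let F ∈ ℂ[X] be a polynomial of degree n ≥ 1, let m ∈ ℂ, r > 0, let K ∈ ℝ with K ≥ 1, and let k be an integer with 0 ≤ k ≤ n. If T_k(m, r, K, F) holds, then the open disk D(m, r) contains exactly k roots of F counted with multiplicity. -/
/-!
In powers of `X - m` the coefficients of `F` are `F⁽ⁱ⁾(m) / i!`, so the test says that on the
circle `|z - m| = r` the single term `a_k (z - m)^k` dominates the sum of all the others. By
Rouché's theorem `F` then has as many roots in `D(m, r)` as `a_k (X - m)^k`, namely `k`.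
Rouché's theorem for polynomials follows from the argument principle: the number of roots in
the disk is `(2πi)⁻¹ ∮ F'/F`, which varies continuously along the homotopy `P + tQ`, `|t| ≤ 1`,
from the dominant term `P` to `F = P + Q`;
this homotopy never vanishes on the circle, so the integer-valued count is constant.
-/

open Polynomial Finset

/-- The Pellet test `T_k(m, r, K, F)`:
`|F^{(k)}(m)|·r^k/k! > K·∑_{0 ≤ i ≤ deg F, i ≠ k} |F^{(i)}(m)|·r^i/i!`. -/
def TkTest (F : Polynomial ℂ) (m : ℂ) (r K : ℝ) (k : ℕ) : Prop :=
  K * ∑ i ∈ (Finset.range (F.natDegree + 1)).erase k,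
      ‖(Polynomial.derivative^[i] F).eval m‖ * r ^ i / (Nat.factorial i) <
    ‖(Polynomial.derivative^[k] F).eval m‖ * r ^ k / (Nat.factorial k)

open Classical in
/-- The number of roots of `F` (counted with multiplicity) in the open disk `D(m, r)`. -/
noncomputable def rootsInDisk (F : Polynomial ℂ) (m : ℂ) (r : ℝ) : ℕ :=
  Multiset.card (F.roots.filter fun z => ‖z - m‖ < r)

open Metric Complex Real

theorem continuousOn_circleIntegral {X E : Type*} [TopologicalSpace X] [NormedAddCommGroup E]
    [NormedSpace ℂ E] {f : X → ℂ → E} {s : Set X} {c : ℂ} {R : ℝ}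
    (hf : ContinuousOn (Function.uncurry f) (s ×ˢ sphere c |R|)) :
    ContinuousOn (fun x => ∮ z in C(c, R), f x z) s := by
  rw [continuousOn_iff_continuous_domRestrict]
  refine intervalIntegral.continuous_parametric_intervalIntegral_of_continuous' ?_ 0 (2 * π)
  simp only [deriv_circleMap]
  refine ((continuous_circleMap 0 R).comp continuous_snd).mul continuous_const |>.smul ?_
  exact hf.comp_continuous (f := fun p : s × ℝ => (p.1.1, circleMap c R p.2)) (by fun_prop)
    fun p => ⟨p.1.2, circleMap_mem_sphere' c R p.2⟩

open Classical in
theorem circleIntegral_sub_inv_of_notMem_sphere {c w : ℂ} {R : ℝ} (hR : 0 ≤ R)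
    (hw : w ∉ sphere c R) :
    ∮ z in C(c, R), (z - w)⁻¹ = if w ∈ ball c R then 2 * π * I else 0 := by
  split_ifs with hball
  · exact circleIntegral.integral_sub_inv_of_mem_ball hball
  have hw' : w ∉ closedBall c R := by
    rw [← ball_union_sphere]; exact fun h => h.elim hball hw
  have hd : ∀ z ∈ closedBall c R, DifferentiableAt ℂ (fun z => (z - w)⁻¹) z := fun z hz =>
    (differentiableAt_id.sub_const w).inv (sub_ne_zero.2 (ne_of_mem_of_not_mem hz hw'))
  exact circleIntegral_eq_zero_of_differentiable_on_off_countable hR Set.countable_empty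
    (fun z hz => (hd z hz).continuousAt.continuousWithinAt)
    fun z hz => hd z (ball_subset_closedBall hz.1)

open Classical in
theorem circleIntegral_multisetSum_sub_inv {c : ℂ} {R : ℝ} (hR : 0 ≤ R) (s : Multiset ℂ)
    (hs : ∀ w ∈ s, w ∉ sphere c R) :
    ∮ z in C(c, R), (s.map fun w => (z - w)⁻¹).sum
      = 2 * π * I * Multiset.card (s.filter fun w => ‖w - c‖ < R) := by
  induction s using Multiset.induction_on with
  | empty => simp [circleIntegral]
  | cons a s ih =>
    have ha : a ∉ sphere c R := hs a (Multiset.mem_cons_self a s)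
    have hs' : ∀ w ∈ s, w ∉ sphere c R := fun w hw => hs w (Multiset.mem_cons_of_mem hw)
    have hint : CircleIntegrable (fun z => (s.map fun w => (z - w)⁻¹).sum) c R := by
      refine ContinuousOn.circleIntegrable hR (continuousOn_multiset_sum _ fun w hw => ?_)
      exact (continuousOn_id.sub continuousOn_const).inv₀ fun z hz =>
        sub_ne_zero.2 (ne_of_mem_of_not_mem hz (hs' w hw))
    simp only [Multiset.map_cons, Multiset.sum_cons]
    rw [circleIntegral.integral_add (by simpa [abs_of_nonneg hR] using Or.inr ha) hint,
      circleIntegral_sub_inv_of_notMem_sphere hR ha, ih hs', Multiset.filter_cons]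
    simp only [mem_ball_iff_norm]
    split_ifs <;> simp only [Multiset.card_add, Multiset.card_singleton, Multiset.card_zero] <;>
      push_cast <;> ring

theorem circleIntegral_derivative_div_eval {F : ℂ[X]} {c : ℂ} {R : ℝ} (hR : 0 ≤ R)
    (hF : ∀ z ∈ sphere c R, F.eval z ≠ 0) :
    ∮ z in C(c, R), F.derivative.eval z / F.eval z = 2 * π * I * rootsInDisk F c R := by
  rw [circleIntegral.integral_congr hR fun z hz =>
    (IsAlgClosed.splits F).eval_derivative_div_eval_of_ne_zero (hF z hz)]
  unfold rootsInDisk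
  simpa only [one_div] using circleIntegral_multisetSum_sub_inv hR F.roots
    fun w hw hws => hF w hws (isRoot_of_mem_roots hw)

theorem rootsInDisk_add_C_mul_eq_of_isPreconnected {P Q : ℂ[X]} {c : ℂ} {R : ℝ} (hR : 0 ≤ R)
    {S : Set ℂ} (hS : IsPreconnected S)
    (hne : ∀ t ∈ S, ∀ z ∈ sphere c R, (P + C t * Q).eval z ≠ 0) {t₀ t₁ : ℂ}
    (ht₀ : t₀ ∈ S) (ht₁ : t₁ ∈ S) :
    rootsInDisk (P + C t₀ * Q) c R = rootsInDisk (P + C t₁ * Q) c R := by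
  have hne' : ∀ p ∈ S ×ˢ sphere c R, P.eval p.2 + p.1 * Q.eval p.2 ≠ 0 := fun p hp => by
    simpa using hne p.1 hp.1 p.2 hp.2
  have hintegral : ContinuousOn
      (fun t => ∮ z in C(c, R), (P + C t * Q).derivative.eval z / (P + C t * Q).eval z) S := by
    refine continuousOn_circleIntegral ?_
    simp only [abs_of_nonneg hR, derivative_add, derivative_C_mul, eval_add, eval_mul, eval_C]
    exact ContinuousOn.div (by fun_prop) (by fun_prop) hne'
  have hcount : ContinuousOn (fun t => ((rootsInDisk (P + C t * Q) c R : ℝ) : ℂ)) S := by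
    refine ((continuousOn_const (c := (2 * π * I)⁻¹)).mul hintegral).congr fun t ht => ?_
    rw [Pi.mul_apply, circleIntegral_derivative_div_eval hR (hne t ht), ← mul_assoc,
      inv_mul_cancel₀ (by simp [pi_ne_zero]), one_mul, ofReal_natCast]
  exact hS.constant ((isometry_ofReal.isEmbedding.comp
    Nat.isClosedEmbedding_coe_real.isEmbedding).isInducing.continuousOn_iff.2 hcount) ht₀ ht₁

theorem rootsInDisk_add_eq_of_norm_lt {P Q : ℂ[X]} {c : ℂ} {R : ℝ} (hR : 0 ≤ R)
    (h : ∀ z ∈ sphere c R, ‖Q.eval z‖ < ‖P.eval z‖) :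
    rootsInDisk (P + Q) c R = rootsInDisk P c R := by
  have hne : ∀ t ∈ closedBall (0 : ℂ) 1, ∀ z ∈ sphere c R, (P + C t * Q).eval z ≠ 0 := by
    intro t ht z hz hzero
    have hPt : P.eval z = -(t * Q.eval z) := by
      simpa [eq_neg_iff_add_eq_zero] using hzero
    refine (h z hz).not_ge ?_
    rw [hPt, norm_neg, norm_mul]
    exact mul_le_of_le_one_left (norm_nonneg _) (mem_closedBall_zero_iff.1 ht)
  simpa using rootsInDisk_add_C_mul_eq_of_isPreconnected hR
    (convex_closedBall (0 : ℂ) 1).isPreconnected hne (t₀ := 1) (t₁ := 0) (by simp) (by simp)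

theorem rootsInDisk_C_mul_X_sub_C_pow {a c : ℂ} {R : ℝ} (ha : a ≠ 0) (hR : 0 < R) (k : ℕ) :
    rootsInDisk (C a * (X - C c) ^ k) c R = k := by
  rw [rootsInDisk, roots_C_mul _ ha, roots_pow, roots_X_sub_C, Multiset.nsmul_singleton,
    Multiset.filter_eq_self.2 fun z hz => by simpa [Multiset.eq_of_mem_replicate hz] using hR,
    Multiset.card_replicate]

theorem Polynomial.eval_iterate_derivative_eq_factorial_mul_taylor_coeff {R : Type*}
    [CommSemiring R] (F : R[X]) (c : R) (i : ℕ) :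
    (derivative^[i] F).eval c = i.factorial * (taylor c F).coeff i := by
  rw [taylor_coeff, ← factorial_smul_hasseDeriv]
  simp [nsmul_eq_mul]

theorem Polynomial.eval_eq_sum_taylor_coeff_mul_pow {R : Type*} [CommRing R] (F : R[X])
    (c z : R) :
    F.eval z = ∑ i ∈ range (F.natDegree + 1), (taylor c F).coeff i * (z - c) ^ i := by
  rw [← eval_eq_sum_range' (by rw [natDegree_taylor]; omega), taylor_eval, sub_add_cancel]

theorem tkTest_iff_taylor {F : ℂ[X]} {m : ℂ} {r K : ℝ} {k : ℕ} :
    TkTest F m r K k ↔ K * ∑ i ∈ (range (F.natDegree + 1)).erase k,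
      ‖(taylor m F).coeff i‖ * r ^ i < ‖(taylor m F).coeff k‖ * r ^ k := by
  have hterm (i : ℕ) : ‖(derivative^[i] F).eval m‖ * r ^ i / i.factorial
      = ‖(taylor m F).coeff i‖ * r ^ i := by
    rw [eval_iterate_derivative_eq_factorial_mul_taylor_coeff, norm_mul, Complex.norm_natCast,
      mul_assoc, mul_div_cancel_left₀ _ (by positivity)]
  simp only [TkTest, hterm]

theorem norm_eval_sub_taylor_term_le {F : ℂ[X]} {c : ℂ} {k : ℕ} (hk : k ≤ F.natDegree) (z : ℂ) :
    ‖(F - C ((taylor c F).coeff k) * (X - C c) ^ k).eval z‖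
      ≤ ∑ i ∈ (range (F.natDegree + 1)).erase k, ‖(taylor c F).coeff i‖ * ‖z - c‖ ^ i := by
  rw [eval_sub, eval_eq_sum_taylor_coeff_mul_pow F c z,
    ← add_sum_erase _ _ (mem_range.2 (Nat.lt_succ_of_le hk))]
  simp only [eval_mul, eval_C, eval_pow, eval_sub, eval_X, add_sub_cancel_left]
  refine (norm_sum_le _ _).trans_eq (sum_congr rfl fun i _ => ?_)
  rw [norm_mul, norm_pow]

theorem pellet_theorem_general (F : Polynomial ℂ) (n : ℕ) (hdeg : F.natDegree = n)
    (m : ℂ) (r : ℝ) (hr : 0 < r) (K : ℝ) (hK : 1 ≤ K) (k : ℕ) (hk : k ≤ n)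
    (hT : TkTest F m r K k) :
    rootsInDisk F m r = k := by
  rw [tkTest_iff_taylor] at hT
  set a := (taylor m F).coeff k
  set P := C a * (X - C m) ^ k
  have hsum_lt := (le_mul_of_one_le_left (by positivity) hK).trans_lt hT
  have ha : a ≠ 0 := by
    rintro ha
    simp only [ha, norm_zero, zero_mul] at hsum_lt
    exact hsum_lt.not_ge (by positivity)
  have hdominant : ∀ z ∈ sphere m r, ‖(F - P).eval z‖ < ‖P.eval z‖ := by
    intro z hz
    rw [mem_sphere_iff_norm] at hz
    calc ‖(F - P).eval z‖
        ≤ _ := norm_eval_sub_taylor_term_le (hdeg ▸ hk) z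
      _ < ‖a‖ * r ^ k := by rwa [hz]
      _ = ‖P.eval z‖ := by simp [P, hz]
  calc rootsInDisk F m r = rootsInDisk (P + (F - P)) m r := by rw [add_sub_cancel]
    _ = rootsInDisk P m r := rootsInDisk_add_eq_of_norm_lt hr.le hdominant
    _ = k := rootsInDisk_C_mul_X_sub_C_pow ha hr k

/-- **Pellet's theorem**: if `T_k(m, r, K, F)` holds for some `K ≥ 1` and `0 ≤ k ≤ n = deg F`,
then the open disk `D(m, r)` contains exactly `k` roots of `F` counted with multiplicity. -/
theorem pellet_theorem (F : Polynomial ℂ) (n : ℕ) (hn : 1 ≤ n) (hdeg : F.natDegree = n)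
    (m : ℂ) (r : ℝ) (hr : 0 < r) (K : ℝ) (hK : 1 ≤ K) (k : ℕ) (hk : k ≤ n)
    (hT : TkTest F m r K k) :
    rootsInDisk F m r = k :=
  pellet_theorem_general F n hdeg m r hr K hK k hk hT
end

section
/- Let F ∈ ℂ[X] be a polynomial of degree n ≥ 2, let m ∈ ℂ, r > 0, and let k be an integer with 0 ≤ k ≤ n. Suppose the open disk D(m, r/(16n)) contains exactly k roots of F counted with multiplicity, and that F has no root z with r/(16n) ≤ |z − m| < 16·n⁴·r. Then T_k(m, r, 3/2, F) holds. -/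
/-!
Write `‖p‖ᵣ = ∑ ‖pᵢ‖ rⁱ`; this weighted `ℓ¹`-norm is submultiplicative. The terms of `T_k` are
`‖F^{(i)}(m)‖ rⁱ / i! = ‖Gᵢ‖ rⁱ` for the Taylor shift `G = F(X + m)`, so `T_k` says that the
degree-`k` term of `G` outweighs the rest of `‖G‖ᵣ`. Split `G = (c p) q`, where `p` is the
monic factor carrying the `k` roots near `m` and `q` the one carrying the far roots `w`. The
factor `X - w` has weighted norm `r + ‖w‖`, within a factor `1 + 1/(16n)` of `r` for a near root
and of `‖w‖` for a far root, hence `‖c p‖ᵣ ‖q‖ᵣ ≤ e^{1/16} D` with `D = ‖c‖ rᵏ ∏ ‖w‖` the size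
of the single product `c pₖ q₀`. Every other product `pᵢ qⱼ` is charged to `‖c p‖ᵣ ‖q‖ᵣ - D`,
so the degree-`k` term is at least `2D - ‖c p‖ᵣ ‖q‖ᵣ`, and `e^{1/16} < 5/4` is what `K = 3/2`
needs.
-/

open Polynomial Finset

namespace Polynomial

section WeightedNorm

variable {R : Type*} [SeminormedRing R] (r : ℝ)

noncomputable def weightedNorm (p : R[X]) : ℝ :=
  p.sum fun i a => ‖a‖ * r ^ i

variable {r}

theorem weightedNorm_eq_sum_of_support_subset {p : R[X]} {s : Finset ℕ} (h : p.support ⊆ s) :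
    weightedNorm r p = ∑ i ∈ s, ‖p.coeff i‖ * r ^ i := by
  rw [weightedNorm, sum_def]
  exact Finset.sum_subset h fun i _ hi => by simp [notMem_support_iff.mp hi]

@[simp]
theorem weightedNorm_zero : weightedNorm r (0 : R[X]) = 0 := by
  simp [weightedNorm]

@[simp]
theorem weightedNorm_monomial (n : ℕ) (a : R) : weightedNorm r (monomial n a) = ‖a‖ * r ^ n :=
  sum_monomial_index a _ (by simp)

theorem weightedNorm_C (a : R) : weightedNorm r (C a) = ‖a‖ := by
  simpa using weightedNorm_monomial (r := r) 0 a

theorem weightedNorm_nonneg (hr : 0 ≤ r) (p : R[X]) : 0 ≤ weightedNorm r p :=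
  Finset.sum_nonneg fun _ _ => by positivity

theorem norm_coeff_mul_pow_le_weightedNorm (hr : 0 ≤ r) (p : R[X]) (i : ℕ) :
    ‖p.coeff i‖ * r ^ i ≤ weightedNorm r p := by
  rw [weightedNorm_eq_sum_of_support_subset (Finset.subset_insert i p.support)]
  exact Finset.single_le_sum (f := fun i => ‖p.coeff i‖ * r ^ i)
    (fun _ _ => by positivity) (Finset.mem_insert_self i _)

theorem weightedNorm_add_le (hr : 0 ≤ r) (p q : R[X]) :
    weightedNorm r (p + q) ≤ weightedNorm r p + weightedNorm r q := by
  rw [weightedNorm_eq_sum_of_support_subset support_add,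
    weightedNorm_eq_sum_of_support_subset Finset.subset_union_left,
    weightedNorm_eq_sum_of_support_subset Finset.subset_union_right, ← Finset.sum_add_distrib]
  gcongr with i
  rw [coeff_add, ← add_mul]
  gcongr
  exact norm_add_le _ _

theorem weightedNorm_sum_le (hr : 0 ≤ r) {ι : Type*} (s : Finset ι) (f : ι → R[X]) :
    weightedNorm r (∑ i ∈ s, f i) ≤ ∑ i ∈ s, weightedNorm r (f i) :=
  Finset.le_sum_of_subadditive _ weightedNorm_zero.le (weightedNorm_add_le hr) s f

theorem weightedNorm_mul_le (hr : 0 ≤ r) (p q : R[X]) :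
    weightedNorm r (p * q) ≤ weightedNorm r p * weightedNorm r q := by
  rw [mul_eq_sum_sum]
  refine (weightedNorm_sum_le hr _ _).trans ?_
  rw [weightedNorm, sum_def, Finset.sum_mul]
  gcongr with i
  rw [sum_def]
  refine (weightedNorm_sum_le hr _ _).trans ?_
  rw [weightedNorm, sum_def, Finset.mul_sum]
  gcongr with j
  rw [weightedNorm_monomial, pow_add]
  have := norm_mul_le (p.coeff i) (q.coeff j)
  calc ‖p.coeff i * q.coeff j‖ * (r ^ i * r ^ j)
      ≤ ‖p.coeff i‖ * ‖q.coeff j‖ * (r ^ i * r ^ j) := by gcongr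
    _ = _ := by ring

theorem weightedNorm_erase (p : R[X]) (n : ℕ) :
    weightedNorm r (p.erase n) = weightedNorm r p - ‖p.coeff n‖ * r ^ n := by
  have hs : (p.erase n).support ⊆ insert n p.support :=
    (support_erase p n).trans_subset ((Finset.erase_subset n _).trans (Finset.subset_insert n _))
  rw [weightedNorm_eq_sum_of_support_subset hs,
    weightedNorm_eq_sum_of_support_subset (Finset.subset_insert n p.support),
    ← Finset.sum_ite_eq_of_mem' _ n (fun i => ‖p.coeff i‖ * r ^ i)
      (Finset.mem_insert_self n _),
    ← Finset.sum_sub_distrib]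
  refine Finset.sum_congr rfl fun i _ => ?_
  by_cases hi : i = n <;> simp [hi]

theorem weightedNorm_X_sub_C_le [NormOneClass R] (hr : 0 ≤ r) (a : R) :
    weightedNorm r (X - C a) ≤ r + ‖a‖ := by
  rw [sub_eq_add_neg, ← C_neg, ← monomial_one_one_eq_X]
  refine (weightedNorm_add_le hr _ _).trans_eq ?_
  rw [weightedNorm_monomial, weightedNorm_C, norm_one, norm_neg, one_mul, pow_one]

theorem two_mul_sub_le_norm_coeff_mul [NormMulClass R] (hr : 0 ≤ r) (p q : R[X]) (k l : ℕ) :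
    2 * (‖p.coeff k‖ * r ^ k * (‖q.coeff l‖ * r ^ l)) -
        weightedNorm r p * weightedNorm r q ≤
      ‖(p * q).coeff (k + l)‖ * r ^ (k + l) := by
  obtain ⟨e, hpq, he⟩ : ∃ e, p * q = monomial (k + l) (p.coeff k * q.coeff l) + e ∧
      weightedNorm r e ≤ ‖p.coeff k‖ * r ^ k * (weightedNorm r q - ‖q.coeff l‖ * r ^ l) +
        (weightedNorm r p - ‖p.coeff k‖ * r ^ k) * weightedNorm r q := by
    refine ⟨monomial k (p.coeff k) * q.erase l + p.erase k * q, ?_, ?_⟩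
    · conv_lhs => rw [← monomial_add_erase p k, ← monomial_add_erase q l]
      rw [add_mul, mul_add, monomial_mul_monomial, monomial_add_erase, add_assoc]
    · refine (weightedNorm_add_le hr _ _).trans (add_le_add ?_ ?_) <;>
        refine (weightedNorm_mul_le hr _ _).trans_eq ?_ <;>
        simp only [weightedNorm_monomial, weightedNorm_erase]
  have hcoeff : (‖p.coeff k‖ * ‖q.coeff l‖ - ‖e.coeff (k + l)‖) * r ^ (k + l) ≤
      ‖(p * q).coeff (k + l)‖ * r ^ (k + l) := by
    rw [hpq, coeff_add, coeff_monomial_same, ← norm_mul]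
    gcongr
    exact norm_sub_le_norm_add _ _
  have := norm_coeff_mul_pow_le_weightedNorm hr e (k + l)
  rw [pow_add] at *
  nlinarith

theorem mul_weightedNorm_mul_sub_lt_of_dominant [NormMulClass R] (hr : 0 ≤ r) {K : ℝ}
    (hK : 0 ≤ K) (p q : R[X]) (k l : ℕ)
    (h : (1 + 2 * K) * (weightedNorm r p * weightedNorm r q) <
      2 * (1 + K) * (‖p.coeff k‖ * r ^ k * (‖q.coeff l‖ * r ^ l))) :
    K * (weightedNorm r (p * q) - ‖(p * q).coeff (k + l)‖ * r ^ (k + l)) <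
      ‖(p * q).coeff (k + l)‖ * r ^ (k + l) := by
  have hupper := mul_le_mul_of_nonneg_left (weightedNorm_mul_le hr p q) hK
  have hlower := mul_le_mul_of_nonneg_left (two_mul_sub_le_norm_coeff_mul hr p q k l)
    (by linarith : 0 ≤ 1 + K)
  linarith

end WeightedNorm

theorem weightedNorm_prod_X_sub_C_le {R : Type*} [SeminormedCommRing R] [NormOneClass R] {r : ℝ}
    (hr : 0 ≤ r) (s : Multiset R) :
    weightedNorm r (s.map fun a => X - C a).prod ≤ (s.map fun a => r + ‖a‖).prod := by
  induction s using Multiset.induction with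
  | empty => simpa using (weightedNorm_C (r := r) (1 : R)).le
  | cons a s ih =>
    simp only [Multiset.map_cons, Multiset.prod_cons]
    refine (weightedNorm_mul_le hr _ _).trans ?_
    gcongr
    · exact weightedNorm_nonneg hr _
    · exact weightedNorm_X_sub_C_le hr a

theorem norm_coeff_zero_prod_X_sub_C {R : Type*} [SeminormedCommRing R] [NormMulClass R]
    [NormOneClass R] (s : Multiset R) :
    ‖(s.map fun a => X - C a).prod.coeff 0‖ = (s.map fun a => ‖a‖).prod := by
  induction s using Multiset.induction with
  | empty => simp
  | cons a s ih => simp [ih]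

theorem mul_weightedNorm_sub_lt_of_roots_separated {R : Type*} [NormedCommRing R]
    [NormMulClass R] [NormOneClass R] {r K ε : ℝ} (hr : 0 < r) (hK : 0 ≤ K) (hε : 0 ≤ ε)
    {c : R} (hc : c ≠ 0) {A B : Multiset R} (hA : ∀ a ∈ A, ‖a‖ ≤ ε * r)
    (hB : ∀ b ∈ B, r ≤ ε * ‖b‖)
    (hKε : (1 + 2 * K) * (1 + ε) ^ (Multiset.card A + Multiset.card B) < 2 * (1 + K))
    {G : R[X]} (hG : G = C c * (A.map fun a => X - C a).prod * (B.map fun b => X - C b).prod) :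
    K * (weightedNorm r G - ‖G.coeff (Multiset.card A)‖ * r ^ Multiset.card A) <
      ‖G.coeff (Multiset.card A)‖ * r ^ Multiset.card A := by
  set P := (B.map fun b => ‖b‖).prod
  have hP : 0 < P := Multiset.prod_pos fun x hx => by
    obtain ⟨b, hb, rfl⟩ := Multiset.mem_map.mp hx
    have := hB b hb
    nlinarith
  have : Nontrivial R := nontrivial_of_ne c 0 hc
  have hcoeffA : ‖(C c * (A.map fun a => X - C a).prod).coeff (Multiset.card A)‖ = ‖c‖ := by
    rw [coeff_C_mul, ← natDegree_multiset_prod_X_sub_C_eq_card,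
      (monic_multiset_prod_of_monic _ _ fun a _ => monic_X_sub_C a).coeff_natDegree, mul_one]
  have hnormA : weightedNorm r (C c * (A.map fun a => X - C a).prod) ≤
      ‖c‖ * (r ^ Multiset.card A * (1 + ε) ^ Multiset.card A) := by
    refine (weightedNorm_mul_le hr.le _ _).trans ?_
    rw [weightedNorm_C, ← mul_pow, mul_comm r, ← Multiset.prod_replicate,
      ← Multiset.map_const']
    gcongr
    refine (weightedNorm_prod_X_sub_C_le hr.le A).trans
      (Multiset.prod_map_le_prod_map₀ _ _ (fun _ _ => by positivity) fun a ha => ?_)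
    linarith [hA a ha]
  have hnormB :
      weightedNorm r (B.map fun b => X - C b).prod ≤ (1 + ε) ^ Multiset.card B * P := by
    rw [← Multiset.prod_replicate, ← Multiset.map_const', ← Multiset.prod_map_mul]
    refine (weightedNorm_prod_X_sub_C_le hr.le B).trans
      (Multiset.prod_map_le_prod_map₀ _ _ (fun _ _ => by positivity) fun b hb => ?_)
    linarith [hB b hb]
  have key := mul_weightedNorm_mul_sub_lt_of_dominant hr.le hK
    (C c * (A.map fun a => X - C a).prod) (B.map fun b => X - C b).prod (Multiset.card A) 0
  rw [← hG, add_zero] at key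
  apply key
  rw [hcoeffA, norm_coeff_zero_prod_X_sub_C, pow_zero, mul_one]
  calc (1 + 2 * K) * (weightedNorm r (C c * (A.map fun a => X - C a).prod) *
        weightedNorm r (B.map fun b => X - C b).prod)
      ≤ (1 + 2 * K) * (‖c‖ * (r ^ Multiset.card A * (1 + ε) ^ Multiset.card A) *
        ((1 + ε) ^ Multiset.card B * P)) := by
        gcongr
        exact weightedNorm_nonneg hr.le _
    _ = ((1 + 2 * K) * (1 + ε) ^ (Multiset.card A + Multiset.card B)) *
        (‖c‖ * r ^ Multiset.card A * P) := by ring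
    _ < 2 * (1 + K) * (‖c‖ * r ^ Multiset.card A * P) := by
        gcongr

theorem taylor_eq_C_leadingCoeff_mul_prod_X_sub_C {R : Type*} [CommRing R] [IsDomain R]
    {p : R[X]} (hroots : Multiset.card p.roots = p.natDegree) (m : R) :
    taylor m p = C p.leadingCoeff * ((p.roots.map (· - m)).map fun a => X - C a).prod := by
  conv_lhs => rw [← C_leadingCoeff_mul_prod_multiset_X_sub_C hroots]
  rw [taylor_apply, mul_comp, C_comp, multiset_prod_comp, Multiset.map_map, Multiset.map_map]
  congr 2
  exact Multiset.map_congr rfl fun z _ => by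
    simp only [Function.comp_apply, sub_comp, X_comp, C_comp, map_sub]
    ring

end Polynomial

theorem norm_iterate_derivative_eval_div_factorial (F : ℂ[X]) (m : ℂ) (i : ℕ) :
    ‖(derivative^[i] F).eval m‖ / i.factorial = ‖(taylor m F).coeff i‖ := by
  rw [taylor_coeff, ← factorial_smul_hasseDeriv, LinearMap.smul_apply, eval_smul, nsmul_eq_mul,
    norm_mul, Complex.norm_natCast, mul_div_cancel_left₀ _ (by positivity)]

theorem tkTest_iff {F : ℂ[X]} {k : ℕ} (hk : k ≤ F.natDegree) (m : ℂ) (r K : ℝ) :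
    TkTest F m r K k ↔
      K * (weightedNorm r (taylor m F) - ‖(taylor m F).coeff k‖ * r ^ k) <
        ‖(taylor m F).coeff k‖ * r ^ k := by
  have hterm (i : ℕ) : ‖(derivative^[i] F).eval m‖ * r ^ i / i.factorial =
      ‖(taylor m F).coeff i‖ * r ^ i := by
    rw [mul_div_right_comm, norm_iterate_derivative_eval_div_factorial]
  rw [TkTest, weightedNorm, sum_over_range' _ (by simp) (F.natDegree + 1)
    (by rw [natDegree_taylor]; omega), Finset.sum_erase_eq_sub (Finset.mem_range.mpr (by omega))]
  simp only [hterm]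

theorem Real.one_add_pow_le_exp_mul {x : ℝ} (hx : -1 ≤ x) (n : ℕ) :
    (1 + x) ^ n ≤ Real.exp (n * x) := by
  rw [Real.exp_nat_mul]
  exact pow_le_pow_left₀ (by linarith) (by linarith [Real.add_one_le_exp x]) n

theorem one_add_one_div_sixteen_mul_pow_lt (n : ℕ) : (1 + 1 / (16 * n : ℝ)) ^ n < 16 / 15 := by
  rcases n.eq_zero_or_pos with rfl | hn
  · norm_num
  calc (1 + 1 / (16 * n : ℝ)) ^ n
      ≤ Real.exp (n * (1 / (16 * n))) :=
        Real.one_add_pow_le_exp_mul (neg_one_lt_zero.le.trans (by positivity)) n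
    _ = Real.exp (1 / 16) := by field_simp
    _ < 1 / (1 - 1 / 16) := Real.exp_bound_div_one_sub_of_interval' (by norm_num) (by norm_num)
    _ = 16 / 15 := by norm_num

/-- **Corollary**: if the disk `D(m,r)` is `(1/(16n), 16n⁴)`-isolating for a set of `k`
roots of `F` (counted with multiplicity), then `T_k(m, r, 3/2, F)` holds. -/
theorem tkTest_cor (F : Polynomial ℂ) (n : ℕ) (hn : 2 ≤ n) (hdeg : F.natDegree = n)
    (m : ℂ) (r : ℝ) (hr : 0 < r) (k : ℕ) (hk : k ≤ n)
    (hin : rootsInDisk F m (r / (16 * n)) = k)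
    (hann : ∀ z ∈ F.roots,
      ¬(r / (16 * n) ≤ ‖z - m‖ ∧ ‖z - m‖ < 16 * n ^ 4 * r)) :
    TkTest F m r (3 / 2) k := by
  have hn1 : (1 : ℝ) ≤ n := by exact_mod_cast (by omega : 1 ≤ n)
  have hF : F ≠ 0 := by rintro rfl; rw [natDegree_zero] at hdeg; omega
  set W := F.roots.map (· - m)
  set A := W.filter fun w => ‖w‖ < r / (16 * n)
  set B := W.filter fun w => ¬‖w‖ < r / (16 * n)
  have hcardA : Multiset.card A = k := by
    rw [← hin, rootsInDisk]
    simp only [A, W, Multiset.filter_map, Multiset.card_map, Function.comp_def]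
  have hcard : Multiset.card A + Multiset.card B = n := by
    rw [← Multiset.card_add, Multiset.filter_add_not, Multiset.card_map,
      IsAlgClosed.card_roots_eq_natDegree, hdeg]
  have htaylor : taylor m F = C F.leadingCoeff * (A.map fun a => X - C a).prod *
      (B.map fun b => X - C b).prod := by
    rw [taylor_eq_C_leadingCoeff_mul_prod_X_sub_C IsAlgClosed.card_roots_eq_natDegree,
      ← Multiset.filter_add_not (fun w => ‖w‖ < r / (16 * n)) (F.roots.map (· - m)),
      Multiset.map_add, Multiset.prod_add, mul_assoc]
  rw [tkTest_iff (hdeg ▸ hk), ← hcardA]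
  refine mul_weightedNorm_sub_lt_of_roots_separated (ε := 1 / (16 * n)) hr (by norm_num)
    (by positivity) (leadingCoeff_ne_zero.mpr hF) (fun a ha => ?_) (fun b hb => ?_) ?_ htaylor
  · rw [one_div_mul_eq_div]
    exact (Multiset.mem_filter.mp ha).2.le
  · obtain ⟨hbW, hb_not_near⟩ := Multiset.mem_filter.mp hb
    obtain ⟨z, hz, rfl⟩ := Multiset.mem_map.mp hbW
    have hfar : 16 * n ^ 4 * r ≤ ‖z - m‖ :=
      not_lt.mp fun h => hann z hz ⟨not_lt.mp hb_not_near, h⟩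
    have hn4 : (n : ℝ) ≤ n ^ 4 := le_self_pow₀ hn1 (by norm_num)
    rw [one_div_mul_eq_div, le_div_iff₀ (by positivity)]
    nlinarith
  · rw [hcard]
    linarith [one_add_one_div_sixteen_mul_pow_lt n]
end

section
/- Let F = ∑_{i=0}^n a_i X^i ∈ ℂ[X] with a_n ≠ 0 and n ≥ 1, and write F = a_n·∏_{i=1}^n (X − z_i) with the roots z_1,…,z_n listed with multiplicity. Then the first Graeffe iterate of F satisfies F^{[1]} = a_n²·∏_{i=1}^n (X − z_i²). In particular, the leading coefficient of F^{[1]} is a_n² and the roots of F^{[1]} are exactly the squares of the roots of F, with corresponding multiplicities. -/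
open Polynomial Finset

/-- The even part `F_e = ∑_j a_{2j} X^j` of a polynomial `F = ∑ a_i X^i`. -/
noncomputable def evenPart (F : Polynomial ℂ) : Polynomial ℂ :=
  ∑ j ∈ Finset.range (F.natDegree + 1), Polynomial.C (F.coeff (2 * j)) * Polynomial.X ^ j

/-- The odd part `F_o = ∑_j a_{2j+1} X^j` of a polynomial `F = ∑ a_i X^i`,
so that `F(X) = F_e(X²) + X·F_o(X²)`. -/
noncomputable def oddPart (F : Polynomial ℂ) : Polynomial ℂ :=
  ∑ j ∈ Finset.range (F.natDegree + 1), Polynomial.C (F.coeff (2 * j + 1)) * Polynomial.X ^ j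

/-- The first Graeffe iterate `F^{[1]} := (−1)^n·(F_e² − X·F_o²)` where `n = deg F`. -/
noncomputable def graeffe (F : Polynomial ℂ) : Polynomial ℂ :=
  (-1) ^ F.natDegree * (evenPart F ^ 2 - Polynomial.X * oddPart F ^ 2)

/-! Substituting `X²` turns the Graeffe iterate into `(-1)ⁿ F(X) F(-X)`, because
`F(±X) = F_e(X²) ± X F_o(X²)`. For `F = a ∏ (X - zᵢ)` each root contributes
`(X - z)(-X - z) = -(X² - z²)`, so both sides of the theorem agree after `X ↦ X²`, and this
substitution is injective on polynomials. -/

theorem coeff_evenPart (F : ℂ[X]) (j : ℕ) : (evenPart F).coeff j = F.coeff (2 * j) := by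
  simp only [evenPart, finsetSum_coeff, coeff_C_mul_X_pow, Finset.sum_ite_eq, Finset.mem_range]
  split_ifs with h
  · rfl
  · exact (coeff_eq_zero_of_natDegree_lt (by omega)).symm

theorem coeff_oddPart (F : ℂ[X]) (j : ℕ) : (oddPart F).coeff j = F.coeff (2 * j + 1) := by
  simp only [oddPart, finsetSum_coeff, coeff_C_mul_X_pow, Finset.sum_ite_eq, Finset.mem_range]
  split_ifs with h
  · rfl
  · exact (coeff_eq_zero_of_natDegree_lt (by omega)).symm

theorem expand_evenPart_add_X_mul_expand_oddPart (F : ℂ[X]) :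
    expand ℂ 2 (evenPart F) + X * expand ℂ 2 (oddPart F) = F := by
  ext n
  rcases Nat.even_or_odd' n with ⟨k, rfl | rfl⟩
  · cases k <;> simp [coeff_expand, coeff_evenPart, coeff_X_mul, Nat.mul_succ]
  · simp [coeff_expand, coeff_oddPart, coeff_X_mul]

theorem expand_comp_neg_X {R : Type*} [CommRing R] (p : R[X]) :
    (expand R 2 p).comp (-X) = expand R 2 p := by
  rw [expand_eq_comp_X_pow, comp_assoc, X_pow_comp, neg_sq]

theorem expand_evenPart_sub_X_mul_expand_oddPart (F : ℂ[X]) :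
    expand ℂ 2 (evenPart F) - X * expand ℂ 2 (oddPart F) = F.comp (-X) := by
  conv_rhs => rw [← expand_evenPart_add_X_mul_expand_oddPart F]
  rw [add_comp, mul_comp, X_comp, expand_comp_neg_X, expand_comp_neg_X, neg_mul, ← sub_eq_add_neg]

theorem expand_graeffe (F : ℂ[X]) :
    expand ℂ 2 (graeffe F) = (-1) ^ F.natDegree * (F * F.comp (-X)) := by
  set E := expand ℂ 2 (evenPart F)
  set O := expand ℂ 2 (oddPart F)
  calc expand ℂ 2 (graeffe F) = (-1) ^ F.natDegree * ((E + X * O) * (E - X * O)) := by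
        simp only [graeffe, map_mul, map_pow, map_neg, map_one, map_sub, expand_X]
        ring
    _ = (-1) ^ F.natDegree * (F * F.comp (-X)) := by
        rw [expand_evenPart_add_X_mul_expand_oddPart, expand_evenPart_sub_X_mul_expand_oddPart]

theorem X_sub_C_mul_comp_neg_X {R : Type*} [CommRing R] (z : R) :
    (X - C z) * (X - C z).comp (-X) = -expand R 2 (X - C (z ^ 2)) := by
  rw [sub_comp, X_comp, C_comp, map_sub, expand_X, expand_C, C_pow]
  ring

theorem prod_X_sub_C_mul_comp_neg_X {R ι : Type*} [CommRing R] (s : Finset ι) (z : ι → R) :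
    (∏ i ∈ s, (X - C (z i))) * (∏ i ∈ s, (X - C (z i))).comp (-X) =
      (-1) ^ s.card * expand R 2 (∏ i ∈ s, (X - C (z i ^ 2))) := by
  rw [Polynomial.prod_comp, ← Finset.prod_mul_distrib, map_prod, ← Finset.prod_const,
    ← Finset.prod_mul_distrib]
  exact Finset.prod_congr rfl fun i _ => by rw [X_sub_C_mul_comp_neg_X, neg_one_mul]

theorem graeffe_eq_prod_sq_general (n : ℕ) (a : ℂ) (ha : a ≠ 0) (z : ℕ → ℂ)
    (F : Polynomial ℂ)
    (hF : F = Polynomial.C a * ∏ i ∈ Finset.range n, (Polynomial.X - Polynomial.C (z i))) :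
    graeffe F =
      Polynomial.C (a ^ 2) * ∏ i ∈ Finset.range n, (Polynomial.X - Polynomial.C ((z i) ^ 2)) := by
  have hdeg : F.natDegree = n := by
    rw [hF, natDegree_C_mul ha, natDegree_prod_of_monic _ _ fun i _ => monic_X_sub_C (z i)]
    simp
  apply expand_injective two_pos
  rw [expand_graeffe, hdeg, hF, mul_comp, C_comp, mul_mul_mul_comm, prod_X_sub_C_mul_comp_neg_X,
    Finset.card_range, map_mul, expand_C, C_pow]
  set Q := expand ℂ 2 (∏ i ∈ Finset.range n, (X - C (z i ^ 2)))
  calc (-1) ^ n * (C a * C a * ((-1) ^ n * Q)) = ((-1) ^ n * (-1) ^ n) * (C a ^ 2 * Q) := by ring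
    _ = C a ^ 2 * Q := by rw [← mul_pow, neg_one_mul, neg_neg, one_pow, one_mul]

/-- **Graeffe iteration squares the roots**: if `F = a·∏_{i<n} (X − z_i)` with `a ≠ 0`,
then `F^{[1]} = a²·∏_{i<n} (X − z_i²)`. -/
theorem graeffe_eq_prod_sq (n : ℕ) (hn : 1 ≤ n) (a : ℂ) (ha : a ≠ 0) (z : ℕ → ℂ)
    (F : Polynomial ℂ)
    (hF : F = Polynomial.C a * ∏ i ∈ Finset.range n, (Polynomial.X - Polynomial.C (z i))) :
    graeffe F =
      Polynomial.C (a ^ 2) * ∏ i ∈ Finset.range n, (Polynomial.X - Polynomial.C ((z i) ^ 2)) :=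
  graeffe_eq_prod_sq_general n a ha z F hF
end

section
/- For every integer n ≥ 2, setting N := ⌈log₂(1 + log₂ n)⌉ + 5, one has (1/(16n))^{1/2^N} > 2√2/3. -/
/-- For every integer `n ≥ 2`, with `N := ⌈log₂(1 + log₂ n)⌉ + 5`, one has
`(1/(16n))^{1/2^N} > 2√2/3`. -/
theorem rho_one_lt_root (n : ℕ) (hn : 2 ≤ n) (N : ℕ)
    (hN : (N : ℤ) = ⌈Real.logb 2 (1 + Real.logb 2 n)⌉ + 5) :
    2 * Real.sqrt 2 / 3 < (1 / (16 * n) : ℝ) ^ ((1 : ℝ) / 2 ^ N) := by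
  have hn2 : (2:ℝ) ≤ (n:ℝ) := by exact_mod_cast hn
  have hnpos : (0:ℝ) < n := by linarith
  set t : ℝ := Real.logb 2 n with ht
  have hL2 : (0:ℝ) < Real.log 2 := Real.log_pos (by norm_num)
  have ht1 : (1:ℝ) ≤ t := by
    have := Real.logb_le_logb_of_le (b := 2) (by norm_num) (by norm_num) hn2
    simpa [Real.logb_self_eq_one] using this
  -- 2^N ≥ 32 * (1 + t)
  have hNreal : Real.logb 2 (1 + t) + 5 ≤ (N:ℝ) := by
    have hceil : Real.logb 2 (1 + t) ≤ (⌈Real.logb 2 (1 + t)⌉ : ℝ) := Int.le_ceil _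
    have : ((N:ℤ) : ℝ) = ((⌈Real.logb 2 (1 + t)⌉ : ℤ) : ℝ) + 5 := by exact_mod_cast hN
    push_cast at this
    linarith
  have h1t : (0:ℝ) < 1 + t := by linarith
  have hP : 32 * (1 + t) ≤ (2:ℝ) ^ N := by
    have h1 : (2:ℝ) ^ (Real.logb 2 (1 + t) + 5) ≤ (2:ℝ) ^ ((N:ℝ)) :=
      Real.rpow_le_rpow_of_exponent_le (by norm_num) hNreal
    rw [Real.rpow_add (by norm_num), Real.rpow_logb (by norm_num) (by norm_num) h1t,
      Real.rpow_natCast] at h1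
    have : (2:ℝ) ^ (5:ℝ) = 32 := by
      rw [show (5:ℝ) = ((5:ℕ):ℝ) by norm_num, Real.rpow_natCast]; norm_num
    rw [this] at h1
    linarith
  have hPpos : (0:ℝ) < (2:ℝ) ^ N := by positivity
  have hx : (0:ℝ) < 1 / (16 * n) := by positivity
  have ha : (0:ℝ) < 2 * Real.sqrt 2 / 3 := by positivity
  rw [Real.rpow_def_of_pos hx]
  rw [← Real.log_lt_iff_lt_exp ha]
  -- compute logs
  have hsqrt : Real.log (Real.sqrt 2) = Real.log 2 / 2 := Real.log_sqrt (by norm_num)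
  have hloga : Real.log (2 * Real.sqrt 2 / 3) = (3/2) * Real.log 2 - Real.log 3 := by
    rw [Real.log_div (by positivity) (by norm_num), Real.log_mul (by norm_num)
      (by positivity), hsqrt]
    ring
  have hlogn : Real.log n = t * Real.log 2 := by
    rw [ht, Real.logb, div_mul_cancel₀ _ (ne_of_gt hL2)]
  have hlogx : Real.log (1 / (16 * n) : ℝ) = -(4 * Real.log 2 + t * Real.log 2) := by
    rw [one_div, Real.log_inv, Real.log_mul (by norm_num) (ne_of_gt hnpos), hlogn,
      show (16:ℝ) = 2^4 by norm_num, Real.log_pow]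
    push_cast; ring
  rw [hloga, hlogx]
  -- key numeric fact: 101 * log 2 < 64 * log 3
  have hkey : 101 * Real.log 2 < 64 * Real.log 3 := by
    have h := Real.log_lt_log (by positivity : (0:ℝ) < 2^101)
      (by norm_num : (2:ℝ)^101 < 3^64)
    rw [Real.log_pow, Real.log_pow] at h
    push_cast at h
    linarith
  -- bound (4+t)*log2 / 2^N ≤ (5/64)*log2
  have hfrac : (4 + t) * Real.log 2 / (2:ℝ)^N ≤ (5/64) * Real.log 2 := by
    have hnum : (0:ℝ) < (4 + t) * Real.log 2 := by
      have : (0:ℝ) < 4 + t := by linarith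
      positivity
    have h1 : (4 + t) * Real.log 2 / (2:ℝ)^N ≤ (4 + t) * Real.log 2 / (32 * (1 + t)) :=
      div_le_div_of_nonneg_left (le_of_lt hnum) (by positivity) hP
    have h2 : (4 + t) * Real.log 2 / (32 * (1 + t)) ≤ (5/64) * Real.log 2 := by
      rw [div_le_iff₀ (by positivity)]
      nlinarith [mul_le_mul_of_nonneg_right (show (4:ℝ) + t ≤ (5/2) * (1+t) by linarith)
        (le_of_lt hL2)]
    linarith
  have hgoal : (3/2) * Real.log 2 - Real.log 3 < -((4 + t) * Real.log 2 / (2:ℝ)^N) := by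
    nlinarith
  calc (3/2) * Real.log 2 - Real.log 3
      < -((4 + t) * Real.log 2 / (2:ℝ)^N) := hgoal
    _ = -(4 * Real.log 2 + t * Real.log 2) * (1 / 2 ^ N) := by ring
end

section
/- Let F ∈ ℂ[X] be a polynomial of degree n ≥ 1, let m ∈ ℂ and r > 0, let N be a natural number, let K ∈ ℝ with K ≥ 1, and let k be an integer with 0 ≤ k ≤ n. If T_k(0, 1, K, (F_Δ)^{[N]}) holds, where (F_Δ)^{[N]} denotes the N-th Graeffe iterate of F_Δ(X) := F(m + r·X), then the open disk D(m, r) contains exactly k roots of F counted with multiplicity. -/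
open Polynomial Finset

/-!
Write `F = c ∏ (X - α)`. A Graeffe step sends `c ∏ (X - w)` to `c² ∏ (X - w²)`, because
`G^{[1]}(y²) = (-1)ⁿ G(y) G(-y)`; hence `(F_Δ)^{[N]} = c' ∏ (X - ((α - m) / r) ^ 2 ^ N)`, and
its roots in the unit disk correspond to the roots `α ∈ D(m, r)` of `F`. The test says that the
monomial `g_k X^k` dominates `G = (F_Δ)^{[N]}` on the unit circle. Then `log (G / g_k X^k)` is a
primitive of `G'/G - k/z` there, so `∮ G'/G = ∮ k/z`, and the argument principle (`∮ G'/G` counts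
the roots of `G` inside the circle, via `G'/G = ∑ 1/(z - w)`) gives exactly `k` roots: Pellet's
theorem.
-/

open Metric

theorem Finset.sum_range_two_mul {M : Type*} [AddCommMonoid M] (n : ℕ) (f : ℕ → M) :
    ∑ i ∈ range (2 * n), f i = ∑ j ∈ range n, (f (2 * j) + f (2 * j + 1)) := by
  induction n with
  | zero => simp
  | succ n ih => rw [Nat.mul_succ, sum_range_succ, sum_range_succ, sum_range_succ, ih, add_assoc]

theorem eval_evenPart_add_mul_eval_oddPart (F : ℂ[X]) (z : ℂ) :
    (evenPart F).eval (z ^ 2) + z * (oddPart F).eval (z ^ 2) = F.eval z := by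
  rw [eval_eq_sum_range' (show F.natDegree < 2 * (F.natDegree + 1) by omega),
    Finset.sum_range_two_mul, evenPart, oddPart, eval_finsetSum, eval_finsetSum, mul_sum,
    ← sum_add_distrib]
  refine sum_congr rfl fun j _ => ?_
  simp only [eval_mul, eval_C, eval_pow, eval_X, ← pow_mul]
  ring

theorem eval_sq_graeffe (F : ℂ[X]) (y : ℂ) :
    (graeffe F).eval (y ^ 2) = (-1) ^ F.natDegree * (F.eval y * F.eval (-y)) := by
  rw [← eval_evenPart_add_mul_eval_oddPart F y, ← eval_evenPart_add_mul_eval_oddPart F (-y),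
    neg_sq]
  simp only [graeffe, eval_mul, eval_pow, eval_neg, eval_one, eval_sub, eval_X]
  ring

theorem graeffe_C_mul_prod_X_sub_C (c : ℂ) (s : Multiset ℂ) :
    graeffe (C c * (s.map (X - C ·)).prod) =
      C (c ^ 2) * ((s.map (· ^ 2)).map (X - C ·)).prod := by
  rcases eq_or_ne c 0 with rfl | hc
  · simp [graeffe, evenPart, oddPart]
  have hdeg : (C c * (s.map (X - C ·)).prod).natDegree = Multiset.card s := by
    rw [natDegree_C_mul hc, natDegree_multiset_prod_X_sub_C_eq_card]
  refine Polynomial.funext fun z => ?_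
  obtain ⟨y, rfl⟩ := IsAlgClosed.exists_pow_nat_eq z two_pos
  have hneg : (s.map fun w => -y - w).prod = (-1) ^ Multiset.card s * (s.map (y + ·)).prod := by
    rw [← Multiset.card_map (y + ·) s, ← Multiset.prod_map_neg, Multiset.map_map]
    exact congrArg _ (Multiset.map_congr rfl fun w _ => by simp only [Function.comp, neg_add'])
  have hsq :
      (s.map fun w => y ^ 2 - w ^ 2).prod = (s.map (y - ·)).prod * (s.map (y + ·)).prod := by
    rw [← Multiset.prod_map_mul]
    exact congrArg _ (Multiset.map_congr rfl fun w _ => by ring)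
  have hsign : ((-1 : ℂ) ^ Multiset.card s) ^ 2 = 1 := by
    rw [← pow_mul, pow_mul', neg_one_sq, one_pow]
  rw [eval_sq_graeffe, hdeg]
  simp only [eval_mul, eval_C, eval_multiset_prod, Multiset.map_map, Function.comp_def, eval_sub,
    eval_X, hneg, hsq]
  linear_combination (c ^ 2 * (s.map (y - ·)).prod * (s.map (y + ·)).prod) * hsign

theorem graeffe_iterate_C_mul_prod_X_sub_C (c : ℂ) (s : Multiset ℂ) (N : ℕ) :
    graeffe^[N] (C c * (s.map (X - C ·)).prod) =
      C (c ^ 2 ^ N) * ((s.map (· ^ 2 ^ N)).map (X - C ·)).prod := by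
  induction N with
  | zero => simp
  | succ N ih =>
    rw [Function.iterate_succ_apply', ih, graeffe_C_mul_prod_X_sub_C]
    simp only [Multiset.map_map, Function.comp_def, ← pow_mul, ← pow_succ]

theorem Polynomial.C_mul_prod_X_sub_C_comp_affine (c : ℂ) (s : Multiset ℂ) {m r : ℂ}
    (hr : r ≠ 0) :
    (C c * (s.map (X - C ·)).prod).comp (C m + C r * X) =
      C (c * r ^ Multiset.card s) * ((s.map fun w => (w - m) / r).map (X - C ·)).prod := by
  have hfactor (w : ℂ) : (X - C w).comp (C m + C r * X) = C r * (X - C ((w - m) / r)) := by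
    simp only [sub_comp, X_comp, C_comp, mul_sub, ← C_mul, mul_div_cancel₀ _ hr, map_sub]
    ring
  rw [mul_comp, C_comp, multiset_prod_comp, Multiset.map_map, Function.comp_def]
  simp only [hfactor, Multiset.prod_map_mul, Multiset.map_const', Multiset.prod_replicate,
    Multiset.map_map, Function.comp_def, C_mul, C_pow, mul_assoc]

theorem graeffe_iterate_comp_affine (F : ℂ[X]) {m r : ℂ} (hr : r ≠ 0) (N : ℕ) :
    graeffe^[N] (F.comp (C m + C r * X)) =
      C ((F.leadingCoeff * r ^ F.natDegree) ^ 2 ^ N) *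
        ((F.roots.map fun w => ((w - m) / r) ^ 2 ^ N).map (X - C ·)).prod := by
  conv_lhs => rw [(IsAlgClosed.splits F).eq_prod_roots]
  rw [C_mul_prod_X_sub_C_comp_affine _ _ hr, IsAlgClosed.card_roots_eq_natDegree,
    graeffe_iterate_C_mul_prod_X_sub_C]
  simp only [Multiset.map_map, Function.comp_def]

section ArgumentPrinciple

open Complex Real

theorem circleIntegral_sub_inv_of_notMem_closedBall {c w : ℂ} {R : ℝ} (hR : 0 ≤ R)
    (hw : w ∉ closedBall c R) : ∮ z in C(c, R), (z - w)⁻¹ = 0 := by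
  refine DiffContOnCl.circleIntegral_eq_zero hR (DifferentiableOn.diffContOnCl ?_)
  refine fun z hz => ((differentiableAt_id.sub_const w).inv ?_).differentiableWithinAt
  exact sub_ne_zero.2 fun h => hw (h ▸ closure_ball_subset_closedBall hz)

theorem circleIntegral_multiset_sum_sub_inv {c : ℂ} {R : ℝ} (hR : 0 ≤ R) (s : Multiset ℂ)
    [DecidablePred (· ∈ ball c R)] (hs : ∀ w ∈ s, w ∉ sphere c R) :
    ∮ z in C(c, R), (s.map fun w => (z - w)⁻¹).sum =
      2 * π * I * Multiset.card (s.filter (· ∈ ball c R)) := by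
  induction s using Multiset.induction with
  | empty => simp [circleIntegral]
  | cons a s ih =>
    have ha : a ∉ sphere c R := hs a (Multiset.mem_cons_self a s)
    have hcont (w : ℂ) (hw : w ∉ sphere c R) : ContinuousOn (fun z => (z - w)⁻¹) (sphere c R) :=
      ContinuousOn.inv₀ (f := (· - w)) (by fun_prop) fun _ hz =>
        sub_ne_zero.2 (ne_of_mem_of_not_mem hz hw)
    have hsum : CircleIntegrable (fun z => (s.map fun w => (z - w)⁻¹).sum) c R :=
      (continuousOn_multiset_sum s fun w hw => hcont w (hs w (Multiset.mem_cons_of_mem hw))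
        ).circleIntegrable hR
    simp only [Multiset.map_cons, Multiset.sum_cons]
    rw [circleIntegral.integral_add ((hcont a ha).circleIntegrable hR) hsum,
      ih fun w hw => hs w (Multiset.mem_cons_of_mem hw)]
    by_cases hball : a ∈ ball c R
    · rw [circleIntegral.integral_sub_inv_of_mem_ball hball, Multiset.filter_cons_of_pos _ hball,
        Multiset.card_cons]
      push_cast
      ring
    · have hout : a ∉ closedBall c R := by
        rw [← ball_union_sphere]; exact fun h => h.elim hball ha
      rw [circleIntegral_sub_inv_of_notMem_closedBall hR hout, Multiset.filter_cons_of_neg _ hball,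
        zero_add]

theorem circleIntegral_logDeriv_eval {c : ℂ} {R : ℝ} (hR : 0 ≤ R) (p : ℂ[X])
    [DecidablePred (· ∈ ball c R)] (hp : ∀ z ∈ sphere c R, p.eval z ≠ 0) :
    ∮ z in C(c, R), logDeriv (fun z => p.eval z) z =
      2 * π * I * Multiset.card (p.roots.filter (· ∈ ball c R)) := by
  rw [← circleIntegral_multiset_sum_sub_inv hR p.roots fun w hw hws =>
    hp w hws (mem_roots'.1 hw).2]
  refine circleIntegral.integral_congr hR fun z hz => ?_
  simp only [logDeriv_apply, Polynomial.deriv,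
    (IsAlgClosed.splits p).eval_derivative_div_eval_of_ne_zero (hp z hz), one_div]

theorem circleIntegral_logDeriv_eq_of_norm_sub_lt {f g : ℂ → ℂ} {c : ℂ} {R : ℝ} (hR : 0 ≤ R)
    (hf : Differentiable ℂ f) (hg : Differentiable ℂ g)
    (hfg : ∀ z ∈ sphere c R, ‖f z - g z‖ < ‖g z‖) :
    ∮ z in C(c, R), logDeriv f z = ∮ z in C(c, R), logDeriv g z := by
  have hg0 (z : ℂ) (hz : z ∈ sphere c R) : g z ≠ 0 :=
    norm_pos_iff.1 ((norm_nonneg _).trans_lt (hfg z hz))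
  have hf0 (z : ℂ) (hz : z ∈ sphere c R) : f z ≠ 0 := fun h0 => by
    simpa [h0] using hfg z hz
  have hint {h : ℂ → ℂ} (hd : Differentiable ℂ h) (h0 : ∀ z ∈ sphere c R, h z ≠ 0) :
      CircleIntegrable (logDeriv h) c R :=
    (hd.deriv.continuous.continuousOn.div hd.continuous.continuousOn h0).circleIntegrable hR
  rw [← sub_eq_zero, ← circleIntegral.integral_sub (hint hf hf0) (hint hg hg0)]
  -- `log (f / g)` is a primitive on the circle, since `f / g` stays in the disk `ball 1 1`.
  refine circleIntegral.integral_eq_zero_of_hasDerivWithinAt (f := fun z => log (f z / g z)) hR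
    fun z hz => ?_
  have hslit : f z / g z ∈ slitPlane := ball_one_subset_slitPlane <| by
    rw [mem_ball, Complex.dist_eq, ← div_self (hg0 z hz), ← sub_div, norm_div, div_lt_one
      (norm_pos_iff.2 (hg0 z hz))]
    exact hfg z hz
  rw [← logDeriv_div z (hf0 z hz) (hg0 z hz) (hf z) (hg z)]
  exact (((hf z).div (hg z) (hg0 z hz)).hasDerivAt.clog hslit).hasDerivWithinAt

end ArgumentPrinciple

theorem Polynomial.norm_eval_sub_coeff_mul_pow_le {𝕜 : Type*} [NormedField 𝕜] (p : 𝕜[X]) {k : ℕ}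
    (hk : k ≤ p.natDegree) (z : 𝕜) :
    ‖p.eval z - p.coeff k * z ^ k‖ ≤
      ∑ i ∈ (range (p.natDegree + 1)).erase k, ‖p.coeff i‖ * ‖z‖ ^ i := by
  rw [eval_eq_sum_range, ← add_sum_erase _ _ (mem_range.2 (Nat.lt_succ_of_le hk)),
    add_sub_cancel_left]
  refine (norm_sum_le _ _).trans_eq (sum_congr rfl fun i _ => ?_)
  rw [norm_mul, norm_pow]

open Complex Real in
theorem Polynomial.card_roots_filter_norm_lt_of_dominant_coeff (p : ℂ[X]) (k : ℕ) {ρ : ℝ}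
    (hρ : 0 < ρ) [DecidablePred fun z : ℂ => ‖z‖ < ρ]
    (hdom : ∑ i ∈ (range (p.natDegree + 1)).erase k, ‖p.coeff i‖ * ρ ^ i <
      ‖p.coeff k‖ * ρ ^ k) :
    Multiset.card (p.roots.filter fun z => ‖z‖ < ρ) = k := by
  classical
  set a := p.coeff k
  have ha : a ≠ 0 := by
    rintro h
    rw [h, norm_zero, zero_mul] at hdom
    exact hdom.not_ge (sum_nonneg fun i _ => by positivity)
  have hnorm (z : ℂ) (hz : z ∈ sphere 0 ρ) : ‖z‖ = ρ := by simpa using hz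
  have hrouche (z : ℂ) (hz : z ∈ sphere 0 ρ) :
      ‖p.eval z - (C a * X ^ k).eval z‖ < ‖(C a * X ^ k).eval z‖ := by
    simp only [eval_mul, eval_C, eval_pow, eval_X, norm_mul, norm_pow, hnorm z hz]
    exact ((p.norm_eval_sub_coeff_mul_pow_le (le_natDegree_of_ne_zero ha) z).trans_eq
      (by rw [hnorm z hz])).trans_lt hdom
  have hmonomial (z : ℂ) (hz : z ∈ sphere 0 ρ) : (C a * X ^ k).eval z ≠ 0 := by
    simp only [eval_mul, eval_C, eval_pow, eval_X]
    exact mul_ne_zero ha (pow_ne_zero _ (norm_ne_zero_iff.1 ((hnorm z hz).trans_ne hρ.ne')))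
  have hp (z : ℂ) (hz : z ∈ sphere 0 ρ) : p.eval z ≠ 0 := fun h0 => by
    simpa [h0] using hrouche z hz
  have key := circleIntegral_logDeriv_eq_of_norm_sub_lt hρ.le p.differentiable
    (C a * X ^ k).differentiable hrouche
  have hzero : Multiset.card ((k • {0} : Multiset ℂ).filter (· ∈ ball 0 ρ)) = k := by
    rw [Multiset.filter_eq_self.2 (by simp [hρ]), Multiset.card_nsmul, Multiset.card_singleton,
      mul_one]
  rw [circleIntegral_logDeriv_eval hρ.le p hp, circleIntegral_logDeriv_eval hρ.le _ hmonomial,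
    roots_C_mul_X_pow ha, hzero] at key
  have hfilter : p.roots.filter (fun z => ‖z‖ < ρ) = p.roots.filter (· ∈ ball 0 ρ) :=
    Multiset.filter_congr fun z _ => mem_ball_zero_iff.symm
  rw [hfilter]
  exact_mod_cast mul_left_cancel₀ (by simp [pi_ne_zero]) key

theorem tkG_test_correct_general (F : Polynomial ℂ) (n : ℕ) (hdeg : F.natDegree = n)
    (m : ℂ) (r : ℝ) (hr : 0 < r) (N : ℕ) (K : ℝ) (hK : 1 ≤ K) (k : ℕ)
    (hT : K * ∑ i ∈ (Finset.range (n + 1)).erase k,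
        ‖(graeffe^[N] (F.comp (Polynomial.C m + Polynomial.C (r : ℂ) * Polynomial.X))).coeff i‖ <
      ‖(graeffe^[N] (F.comp (Polynomial.C m + Polynomial.C (r : ℂ) * Polynomial.X))).coeff k‖) :
    rootsInDisk F m r = k := by
  set G := graeffe^[N] (F.comp (C m + C (r : ℂ) * X))
  have hG : G = _ := graeffe_iterate_comp_affine F (m := m) (Complex.ofReal_ne_zero.2 hr.ne') N
  have hc : (F.leadingCoeff * (r : ℂ) ^ F.natDegree) ^ 2 ^ N ≠ 0 := fun h0 => by
    simp [hG, h0] at hT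
  have hGdeg : G.natDegree = n := by
    rw [hG, natDegree_C_mul hc, natDegree_multiset_prod_X_sub_C_eq_card, Multiset.card_map,
      IsAlgClosed.card_roots_eq_natDegree, hdeg]
  have hdom : ∑ i ∈ (range (G.natDegree + 1)).erase k, ‖G.coeff i‖ * 1 ^ i <
      ‖G.coeff k‖ * 1 ^ k := by
    simpa only [one_pow, mul_one, hGdeg] using
      (le_mul_of_one_le_left (sum_nonneg fun i _ => norm_nonneg _) hK).trans_lt hT
  have hcount := G.card_roots_filter_norm_lt_of_dominant_coeff k one_pos hdom
  rw [hG, roots_C_mul _ hc, roots_multiset_prod_X_sub_C, Multiset.filter_map,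
    Multiset.card_map] at hcount
  rw [rootsInDisk, ← hcount]
  congr 1
  refine Multiset.filter_congr fun w _ => ?_
  rw [Function.comp_apply, norm_pow, pow_lt_one_iff_of_nonneg (norm_nonneg _) (by positivity),
    norm_div, Complex.norm_real, Real.norm_of_nonneg hr.le, div_lt_one hr]

/-- **Correctness of the `T_k^G`-test** (Lemma `softtest:success` (b)): if
`T_k(0, 1, K, (F_Δ)^{[N]})` holds for some `K ≥ 1`, where `(F_Δ)^{[N]}` is the `N`-th
Graeffe iterate of `F_Δ(X) := F(m + r·X)`, then `D(m, r)` contains exactly `k` roots of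
`F` counted with multiplicity. -/
theorem tkG_test_correct (F : Polynomial ℂ) (n : ℕ) (hn : 1 ≤ n) (hdeg : F.natDegree = n)
    (m : ℂ) (r : ℝ) (hr : 0 < r) (N : ℕ) (K : ℝ) (hK : 1 ≤ K) (k : ℕ) (hk : k ≤ n)
    (hT : K * ∑ i ∈ (Finset.range (n + 1)).erase k,
        ‖(graeffe^[N] (F.comp (Polynomial.C m + Polynomial.C (r : ℂ) * Polynomial.X))).coeff i‖ <
      ‖(graeffe^[N] (F.comp (Polynomial.C m + Polynomial.C (r : ℂ) * Polynomial.X))).coeff k‖) :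
    rootsInDisk F m r = k :=
  tkG_test_correct_general F n hdeg m r hr N K hK k hT
end

section
/- Let E_ℓ, E_r ∈ ℝ be nonnegative with max(E_ℓ, E_r) > 0, let δ > 0 satisfy 16·δ ≤ max(E_ℓ, E_r), and let Ẽ_ℓ, Ẽ_r ∈ ℝ satisfy |Ẽ_ℓ − E_ℓ| ≤ δ and |Ẽ_r − E_r| ≤ δ. Define E_ℓ^− := max(0, Ẽ_ℓ − δ), E_ℓ^+ := max(0, Ẽ_ℓ + δ), E_r^− := max(0, Ẽ_r − δ), E_r^+ := max(0, Ẽ_r + δ). Then at least one of the following holds: (i) E_ℓ^− ≥ E_r^+; (ii) E_r^− ≥ E_ℓ^+; (iii) (2/3)·E_ℓ^+ ≤ E_r^− and E_r^+ ≤ (3/2)·E_ℓ^−. -/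
/-- **Soft comparison** (Lemma `precision:compare`): given `δ`-approximations
`Ẽ_ℓ, Ẽ_r` of nonnegative reals `E_ℓ, E_r` with `16·δ ≤ max(E_ℓ, E_r)`, and the
certified bounds `E^± := max(0, Ẽ ± δ)`, at least one of the outcomes
True (`E_ℓ^− ≥ E_r^+`), False (`E_r^− ≥ E_ℓ^+`) or
Undecided (`(2/3)·E_ℓ^+ ≤ E_r^−` and `E_r^+ ≤ (3/2)·E_ℓ^−`) occurs. -/
theorem soft_predicate_terminates (El Er tEl tEr δ : ℝ)
    (hEl : 0 ≤ El) (hEr : 0 ≤ Er) (hmax : 0 < max El Er)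
    (hδ : 0 < δ) (hδ' : 16 * δ ≤ max El Er)
    (hl : |tEl - El| ≤ δ) (hr : |tEr - Er| ≤ δ) :
    max 0 (tEr + δ) ≤ max 0 (tEl - δ) ∨
    max 0 (tEl + δ) ≤ max 0 (tEr - δ) ∨
    ((2 / 3) * max 0 (tEl + δ) ≤ max 0 (tEr - δ) ∧
      max 0 (tEr + δ) ≤ (3 / 2) * max 0 (tEl - δ)) := by
  rw [abs_le] at hl hr
  by_cases h1 : tEr + δ ≤ tEl - δ
  · exact Or.inl (max_le_max le_rfl h1)
  by_cases h2 : tEl + δ ≤ tEr - δ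
  · exact Or.inr (Or.inl (max_le_max le_rfl h2))
  push_neg at h1 h2
  right; right
  have hmm : 16 * δ ≤ El ∨ 16 * δ ≤ Er := by
    rcases le_max_iff.mp hδ' with h | h
    · exact Or.inl h
    · exact Or.inr h
  have hEl12 : 12 * δ ≤ El := by rcases hmm with h | h <;> linarith
  have hEr12 : 12 * δ ≤ Er := by rcases hmm with h | h <;> linarith
  have ha : 10 * δ ≤ tEl - δ := by linarith
  have hb : 10 * δ ≤ tEr - δ := by linarith
  rw [max_eq_right (by linarith : (0:ℝ) ≤ tEl - δ),
      max_eq_right (by linarith : (0:ℝ) ≤ tEr - δ),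
      max_eq_right (by linarith : (0:ℝ) ≤ tEl + δ),
      max_eq_right (by linarith : (0:ℝ) ≤ tEr + δ)]
  constructor <;> linarith
end

section
/- Let F = a·∏_{i=1}^n (X − z_i) ∈ ℂ[X] with a ≠ 0 and n = deg F ≥ 2, where z_1,…,z_n are the roots of F listed with multiplicity. Let k be an integer with 1 ≤ k ≤ n, let K ∈ ℝ with K ≥ 1, and let c_1, c_2 ∈ ℝ satisfy c_2·n·ln((1 + 2K)/(2K)) ≥ c_1·n ≥ k/ln(1 + 1/(8K)). Let m ∈ ℂ and r > 0, and assume |z_i − m| < r for 1 ≤ i ≤ k and |z_i − m| ≥ 4·c_2·k·n³·r for k < i ≤ n. Then F^{(k)}(z) ≠ 0 for every z ∈ ℂ with |z − m| < c_2·n²·r. -/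
/-!
By Taylor expansion at `w`, `F⁽ᵏ⁾(w) = k! · a · e_{n-k}(w - z₀, …, w - z_{n-1})`, the coefficient
of `X ^ k` in `∏ (X + (w - zᵢ))`. For `|w - m| < c₂n²r` the `k` clustered values `w - zᵢ` are
small (`≤ N`) and the other `n - k` are large (`≥ M`), so the term `∏_{i ≥ k} (w - zᵢ)` dominates
`e_{n-k}`: a subset trading `j` large factors for small ones contributes at most `(N/M)^j` times
it, and these contributions add up to at most `(1 + nN/M)^k - 1 < 1` times it once `2knN ≤ M`.
The hypotheses on `c₁, c₂` give `c₂n ≥ 16k`, which is more than enough for that.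
-/

open Polynomial Finset
open scoped Nat

section Taylor
variable {R : Type*} [CommRing R]

theorem eval_iterate_derivative_eq_factorial_mul_coeff_taylor (f : R[X]) (k : ℕ) (w : R) :
    (derivative^[k] f).eval w = k ! * (taylor w f).coeff k := by
  rw [taylor_coeff, ← factorial_smul_hasseDeriv]
  simp [nsmul_eq_mul]

theorem taylor_prod_X_sub_C {ι : Type*} (s : Finset ι) (z : ι → R) (w : R) :
    taylor w (∏ i ∈ s, (X - C (z i))) = ∏ i ∈ s, (X + C (w - z i)) :=
  calc taylor w (∏ i ∈ s, (X - C (z i))) = ∏ i ∈ s, taylor w (X - C (z i)) :=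
        map_prod (taylorAlgHom w) _ s
    _ = ∏ i ∈ s, (X + C (w - z i)) := by simp [sub_eq_add_neg, add_assoc]

end Taylor

theorem natDegree_prod_X_add_C {S ι : Type*} [CommSemiring S] [Nontrivial S] (s : Finset ι)
    (y : ι → S) : (∏ i ∈ s, (X + C (y i))).natDegree = #s := by
  rw [natDegree_prod_of_monic _ _ fun i _ => monic_X_add_C (y i)]
  simp

theorem one_add_pow_lt_two {x : ℝ} {k : ℕ} (hx : 0 ≤ x) (h : 2 * k * x ≤ 1) :
    (1 + x) ^ k < 2 :=
  calc (1 + x) ^ k ≤ Real.exp x ^ k := by gcongr; linarith [Real.add_one_le_exp x]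
    _ = Real.exp (k * x) := (Real.exp_nat_mul x k).symm
    _ ≤ Real.exp (1 / 2) := by gcongr; linarith
    _ < 2 := by
      rw [← Real.lt_log_iff_exp_lt two_pos]
      linarith [Real.log_two_gt_d9]

section Estimates
variable {𝕜 ι : Type*} [NormedField 𝕜] {y : ι → 𝕜}

theorem norm_coeff_prod_X_add_C_le {s : Finset ι} {N : ℝ} (h : ∀ i ∈ s, ‖y i‖ ≤ N)
    (p : ℕ) : ‖(∏ i ∈ s, (X + C (y i))).coeff p‖ ≤ (#s).choose p * N ^ (#s - p) := by
  rcases le_or_gt p #s with hp | hp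
  · rw [Finset.prod_X_add_C_coeff s y hp, ← Nat.choose_symm hp, ← card_powersetCard,
      ← nsmul_eq_mul]
    refine (norm_sum_le _ _).trans (sum_le_card_nsmul _ _ _ fun t ht => ?_)
    obtain ⟨hts, htc⟩ := mem_powersetCard.1 ht
    rw [norm_prod, ← htc, ← prod_const]
    exact prod_le_prod (fun i _ => norm_nonneg _) fun i hi => h i (hts hi)
  · rw [coeff_eq_zero_of_natDegree_lt (natDegree_prod_X_add_C s y ▸ hp),
      Nat.choose_eq_zero_of_lt hp]
    simp

theorem norm_coeff_prod_X_add_C_mul_pow_le {s : Finset ι} {M : ℝ} (hM : 0 ≤ M)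
    (h : ∀ i ∈ s, M ≤ ‖y i‖) (q : ℕ) :
    ‖(∏ i ∈ s, (X + C (y i))).coeff q‖ * M ^ q ≤ (#s).choose q * ‖∏ i ∈ s, y i‖ := by
  classical
  rcases le_or_gt q #s with hq | hq
  · rw [Finset.prod_X_add_C_coeff s y hq, ← Nat.choose_symm hq, ← card_powersetCard,
      ← nsmul_eq_mul]
    refine (mul_le_mul_of_nonneg_right (norm_sum_le _ _) (by positivity)).trans ?_
    rw [sum_mul]
    refine sum_le_card_nsmul _ _ _ fun t ht => ?_
    obtain ⟨hts, htc⟩ := mem_powersetCard.1 ht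
    have hcard : #(s \ t) = q := by rw [card_sdiff_of_subset hts, htc]; omega
    rw [← prod_sdiff hts, norm_mul, mul_comm ‖_‖, ← hcard, ← prod_const, norm_prod (s \ t)]
    gcongr with i hi
    exact h i (sdiff_subset hi)
  · rw [coeff_eq_zero_of_natDegree_lt (natDegree_prod_X_add_C s y ▸ hq),
      Nat.choose_eq_zero_of_lt hq]
    simp

theorem coeff_prod_mul_prod_X_add_C_ne_zero {A B : Finset ι} {N M : ℝ} (hM : 0 < M)
    (hA : ∀ i ∈ A, ‖y i‖ ≤ N) (hB : ∀ i ∈ B, M ≤ ‖y i‖) (hsep : 2 * #A * #B * N ≤ M) :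
    ((∏ i ∈ B, (X + C (y i))) * ∏ i ∈ A, (X + C (y i))).coeff #A ≠ 0 := by
  set P := ∏ i ∈ A, (X + C (y i))
  set Q := ∏ i ∈ B, (X + C (y i))
  set k := #A
  have hPk : P.coeff k = 1 := by simp [P, k, Finset.prod_X_add_C_coeff A y le_rfl]
  have hQ0 : Q.coeff 0 = ∏ i ∈ B, y i := by simp [Q, coeff_zero_eq_eval_zero, eval_prod]
  have hQ0_pos : 0 < ‖∏ i ∈ B, y i‖ := by
    rw [norm_prod]
    exact prod_pos fun i hi => hM.trans_le (hB i hi)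
  have hsmall : (1 + #B * N / M) ^ k < 2 := by
    rcases A.eq_empty_or_nonempty with hA₀ | ⟨i, hi⟩
    · simp [k, hA₀]
    have hN : 0 ≤ N := (norm_nonneg _).trans (hA i hi)
    refine one_add_pow_lt_two (by positivity) ?_
    rwa [← mul_div_assoc, ← mul_assoc, div_le_one hM]
  -- each term is bounded by the matching term of `add_pow` for `(#B * N / M + 1) ^ k`
  have hterm : ∀ q ∈ range (k + 1), ‖Q.coeff q‖ * ‖P.coeff (k - q)‖ ≤
      ‖∏ i ∈ B, y i‖ * ((#B * N / M) ^ q * 1 ^ (k - q) * k.choose q) := by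
    intro q hq
    have hqk : q ≤ k := Nat.lt_succ_iff.1 (mem_range.1 hq)
    have hP := norm_coeff_prod_X_add_C_le hA (k - q)
    rw [Nat.choose_symm hqk, Nat.sub_sub_self hqk] at hP
    have hQ : ‖Q.coeff q‖ * M ^ q ≤ #B ^ q * ‖∏ i ∈ B, y i‖ :=
      (norm_coeff_prod_X_add_C_mul_pow_le hM.le hB q).trans
        (by gcongr; exact_mod_cast Nat.choose_le_pow _ _)
    calc ‖Q.coeff q‖ * ‖P.coeff (k - q)‖
        = ‖Q.coeff q‖ * M ^ q * ‖P.coeff (k - q)‖ / M ^ q := by field_simp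
      _ ≤ #B ^ q * ‖∏ i ∈ B, y i‖ * (k.choose q * N ^ q) / M ^ q := by gcongr
      _ = ‖∏ i ∈ B, y i‖ * ((#B * N / M) ^ q * 1 ^ (k - q) * k.choose q) := by ring
  have hsum : ∑ q ∈ range (k + 1), ‖Q.coeff q‖ * ‖P.coeff (k - q)‖ ≤
      ‖∏ i ∈ B, y i‖ * (1 + #B * N / M) ^ k := by
    rw [add_comm 1, add_pow, mul_sum]
    exact sum_le_sum hterm
  have hcoeff : (Q * P).coeff k = ∑ q ∈ range (k + 1), Q.coeff q * P.coeff (k - q) := by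
    rw [coeff_mul, Nat.sum_antidiagonal_eq_sum_range_succ (fun i j => Q.coeff i * P.coeff j)]
  intro h0
  rw [hcoeff, sum_range_succ', Nat.sub_zero, hPk, hQ0, mul_one, add_eq_zero_iff_neg_eq] at h0
  rw [sum_range_succ', Nat.sub_zero, hPk, hQ0, norm_one, mul_one] at hsum
  have hrest : ‖∏ i ∈ B, y i‖ ≤
      ∑ q ∈ range k, ‖Q.coeff (q + 1)‖ * ‖P.coeff (k - (q + 1))‖ := by
    rw [← h0, norm_neg]
    exact (norm_sum_le _ _).trans_eq (by simp only [norm_mul])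
  nlinarith

end Estimates

theorem sixteen_mul_le_of_log_bounds {K k a b : ℝ} (hK : 1 ≤ K) (hk : 0 < k)
    (hab : a ≤ b * Real.log ((1 + 2 * K) / (2 * K)))
    (hka : k / Real.log (1 + 1 / (8 * K)) ≤ a) :
    16 * k ≤ b := by
  have hK₀ : 0 < K := by linarith
  have hlog₁ : Real.log (1 + 1 / (8 * K)) ≤ 1 / (8 * K) := by
    linarith [Real.log_le_sub_one_of_pos (x := 1 + 1 / (8 * K)) (by positivity)]
  have hlog₂ : Real.log ((1 + 2 * K) / (2 * K)) ≤ 1 / (2 * K) := by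
    have := Real.log_le_sub_one_of_pos (x := (1 + 2 * K) / (2 * K)) (by positivity)
    rwa [div_sub_one (by positivity), add_sub_cancel_right] at this
  have hpos₁ : 0 < Real.log (1 + 1 / (8 * K)) := Real.log_pos (by simp; positivity)
  have hpos₂ : 0 < Real.log ((1 + 2 * K) / (2 * K)) :=
    Real.log_pos (by rw [one_lt_div (by positivity)]; linarith)
  have ha : 8 * K * k ≤ a :=
    calc 8 * K * k = k / (1 / (8 * K)) := by field_simp
      _ ≤ k / Real.log (1 + 1 / (8 * K)) := div_le_div_of_nonneg_left hk.le hpos₁ hlog₁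
      _ ≤ a := hka
  have hb : 0 < b := by
    by_contra! hb
    nlinarith [mul_nonpos_of_nonpos_of_nonneg hb hpos₂.le, mul_pos hK₀ hk]
  have : a ≤ b / (2 * K) :=
    hab.trans ((mul_le_mul_of_nonneg_left hlog₂ hb.le).trans_eq (mul_one_div b _))
  rw [le_div_iff₀ (by positivity)] at this
  nlinarith [mul_le_mul_of_nonneg_right (one_le_pow₀ hK : 1 ≤ K ^ 2) hk.le]

theorem deriv_ne_zero_near_cluster_general (n : ℕ) (a : ℂ) (ha : a ≠ 0) (z : ℕ → ℂ)
    (F : Polynomial ℂ)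
    (hF : F = Polynomial.C a * ∏ i ∈ Finset.range n, (Polynomial.X - Polynomial.C (z i)))
    (k : ℕ) (hk1 : 1 ≤ k) (hk : k ≤ n) (K : ℝ) (hK : 1 ≤ K) (c₁ c₂ : ℝ)
    (hc₂ : c₁ * n ≤ c₂ * n * Real.log ((1 + 2 * K) / (2 * K)))
    (hc₁ : (k : ℝ) / Real.log (1 + 1 / (8 * K)) ≤ c₁ * n)
    (m : ℂ) (r : ℝ) (hr : 0 < r)
    (hin : ∀ i, i < k → ‖z i - m‖ < r)
    (hout : ∀ i, k ≤ i → i < n → 4 * c₂ * k * n ^ 3 * r ≤ ‖z i - m‖) :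
    ∀ w : ℂ, ‖w - m‖ < c₂ * n ^ 2 * r →
      (Polynomial.derivative^[k] F).eval w ≠ 0 := by
  intro w hw
  have hk₀ : (1 : ℝ) ≤ k := by exact_mod_cast hk1
  have hkn : (k : ℝ) ≤ n := by exact_mod_cast hk
  have hc₂n := sixteen_mul_le_of_log_bounds hK (by linarith) hc₂ hc₁
  have hR : 2 * k * n * r ≤ c₂ * n ^ 2 * r := by
    linarith [mul_le_mul_of_nonneg_right hc₂n (by positivity : (0 : ℝ) ≤ n * r),
      (by positivity : (0 : ℝ) ≤ k * (n * r))]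
  set R := c₂ * n ^ 2 * r
  have hnear : ∀ i ∈ range k, ‖w - z i‖ ≤ R + r := fun i hi => by
    linarith [norm_sub_le_norm_sub_add_norm_sub w m (z i), norm_sub_rev m (z i),
      hin i (mem_range.1 hi)]
  have hfar : ∀ i ∈ Ico k n, (4 * k * n - 1) * R ≤ ‖w - z i‖ := fun i hi => by
    linarith [norm_sub_le_norm_sub_add_norm_sub (z i) w m, norm_sub_rev (z i) w,
      hout i (mem_Ico.1 hi).1 (mem_Ico.1 hi).2,
      show 4 * c₂ * k * n ^ 3 * r = 4 * k * n * R by ring]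
  have hkn₁ : 1 ≤ (k : ℝ) * n := by nlinarith
  have hRpos : 0 < R := lt_of_lt_of_le (mul_pos (by linarith) hr) hR
  have hM : 0 < (4 * k * n - 1) * R := mul_pos (by linarith) hRpos
  have hsep : 2 * #(range k) * #(Ico k n) * (R + r) ≤ (4 * k * n - 1) * R := by
    rw [card_range, Nat.card_Ico, Nat.cast_sub hk]
    have : 2 * k * (n - k) * (R + r) ≤ 2 * k * n * (R + r) := by gcongr; linarith
    nlinarith [mul_le_mul_of_nonneg_right hkn₁ hRpos.le]
  have key := coeff_prod_mul_prod_X_add_C_ne_zero hM hnear hfar hsep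
  rw [card_range] at key
  rw [hF, eval_iterate_derivative_eq_factorial_mul_coeff_taylor, taylor_mul, taylor_C,
    coeff_C_mul, taylor_prod_X_sub_C, ← prod_range_mul_prod_Ico _ hk, mul_comm (∏ i ∈ range k, _)]
  exact mul_ne_zero (Nat.cast_ne_zero.2 k.factorial_ne_zero) (mul_ne_zero ha key)

/-- **Nonvanishing of the `k`-th derivative near a cluster of `k` roots**
(first assertion of the first appendix lemma): if `D(m,r)` is `(1, 4c₂kn³)`-isolating
for the roots `z_1, …, z_k` of `F = a·∏ (X − z_i)`, then `F^{(k)}` has no root in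
`D(m, c₂n²r)`. -/
theorem deriv_ne_zero_near_cluster (n : ℕ) (hn : 2 ≤ n) (a : ℂ) (ha : a ≠ 0) (z : ℕ → ℂ)
    (F : Polynomial ℂ)
    (hF : F = Polynomial.C a * ∏ i ∈ Finset.range n, (Polynomial.X - Polynomial.C (z i)))
    (k : ℕ) (hk1 : 1 ≤ k) (hk : k ≤ n) (K : ℝ) (hK : 1 ≤ K) (c₁ c₂ : ℝ)
    (hc₂ : c₁ * n ≤ c₂ * n * Real.log ((1 + 2 * K) / (2 * K)))
    (hc₁ : (k : ℝ) / Real.log (1 + 1 / (8 * K)) ≤ c₁ * n)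
    (m : ℂ) (r : ℝ) (hr : 0 < r)
    (hin : ∀ i, i < k → ‖z i - m‖ < r)
    (hout : ∀ i, k ≤ i → i < n → 4 * c₂ * k * n ^ 3 * r ≤ ‖z i - m‖) :
    ∀ w : ℂ, ‖w - m‖ < c₂ * n ^ 2 * r →
      (Polynomial.derivative^[k] F).eval w ≠ 0 :=
  deriv_ne_zero_near_cluster_general n a ha z F hF k hk1 hk K hK c₁ c₂ hc₂ hc₁ m r hr hin hout
end

section
/- Let F = a·∏_{i=1}^n (X − z_i) ∈ ℂ[X] with a ≠ 0 and n = deg F ≥ 2, where z_1,…,z_n are the roots listed with multiplicity. Let k be an integer with 0 ≤ k ≤ n, let K ∈ ℝ with K ≥ 1, and let c_1 ∈ ℝ satisfy c_1·n ≥ max(1,k)/ln(1 + 1/(8K)). Let λ ∈ ℝ with λ ≥ 16·K·max(1,k)²·n, let m ∈ ℂ and r > 0, and assume |z_i − m| < r for 1 ≤ i ≤ k and |z_i − m| ≥ λ·r for k < i ≤ n. Then F^{(k)}(m) ≠ 0 and ∑_{i=0}^{k−1} (|F^{(i)}(m)| / |F^{(k)}(m)|)·(c_1·n·r)^{i−k}·k!/i!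 < 1/(2K). -/
/-!
Shifting to `m`, the Taylor expansion of `F` at `m` is `a · P · Q`, where `P` collects the `k`
roots in `D(m, r)` and `Q` the roots outside `D(m, λr)`, and `F^{(j)}(m) = j! · a · (PQ)_j`.
By Vieta, `|P_i| ≤ C(k,i) r^{k-i}` and `|Q_t| (λr)^t ≤ C(n-k,t) |Q_0|`. As `λ ≥ 16 k n`, the term
`P_{j-t} Q_t` of `(PQ)_j` is at most `C(k,j) r^{k-j} |Q_0| 16^{-t}` for `j ≤ k`. Summing these
geometric bounds, `|(PQ)_j| ≤ (16/15) C(k,j) r^{k-j} |Q_0|`, while `(PQ)_k = Q_0 + O(|Q_0|/15)`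
because `P` is monic of degree `k`; hence `|(PQ)_j| ≤ (8/7) C(k,j) r^{k-j} |(PQ)_k|`. With
`x = c₁ n` the head sum is then at most `(8/7)((1 + 1/x)^k - 1) ≤ (8/7)(e^{k/x} - 1) ≤ 1/(7K)`.
-/

open Polynomial Finset

open scoped Nat

theorem Nat.choose_sub_le_choose_mul_pow {k j t : ℕ} (htj : t ≤ j) (hjk : j ≤ k) :
    k.choose (j - t) ≤ k.choose j * k ^ t :=
  calc k.choose (j - t) ≤ k.choose (j - t) * (k - (j - t)).choose (j - (j - t)) :=
        Nat.le_mul_of_pos_right _ (Nat.choose_pos (by omega))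
    _ = k.choose j * j.choose t := by
        rw [← Nat.choose_mul (Nat.sub_le j t), Nat.choose_symm htj]
    _ ≤ k.choose j * k ^ t :=
        Nat.mul_le_mul_left _ ((Nat.choose_le_pow j t).trans (Nat.pow_le_pow_left hjk t))

theorem sum_range_choose_mul_pow_sub {R : Type*} [CommRing R] (y : R) (k : ℕ) :
    ∑ j ∈ range k, (k.choose j : R) * y ^ (k - j) = (1 + y) ^ k - 1 := by
  rw [add_pow, sum_range_succ]
  simp only [one_pow, one_mul, Nat.sub_self, pow_zero, Nat.choose_self, Nat.cast_one, mul_one]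
  simp only [mul_comm, add_sub_cancel_right]

theorem Real.one_add_pow_le_of_mul_le_log {y δ : ℝ} {k : ℕ} (hy : 0 ≤ y) (hδ : 0 < 1 + δ)
    (hky : k * y ≤ Real.log (1 + δ)) : (1 + y) ^ k ≤ 1 + δ :=
  calc (1 + y) ^ k ≤ Real.exp y ^ k := by
        gcongr; linarith [Real.add_one_le_exp y]
    _ = Real.exp (k * y) := (Real.exp_nat_mul y k).symm
    _ ≤ Real.exp (Real.log (1 + δ)) := Real.exp_le_exp.2 hky
    _ = 1 + δ := Real.exp_log hδ

theorem Real.one_add_inv_pow_le_of_div_log_le {x δ : ℝ} {k : ℕ} (hδ : 0 < δ)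
    (hx : max 1 (k : ℝ) / Real.log (1 + δ) ≤ x) : 0 < x ∧ (1 + x⁻¹) ^ k ≤ 1 + δ := by
  have hL : 0 < Real.log (1 + δ) := Real.log_pos (by linarith)
  have hx₀ : 0 < x := (div_pos (by positivity) hL).trans_le hx
  refine ⟨hx₀, Real.one_add_pow_le_of_mul_le_log (by positivity) (by linarith) ?_⟩
  rw [← div_eq_mul_inv, div_le_iff₀ hx₀]
  rw [div_le_iff₀ hL] at hx
  nlinarith [le_max_right 1 (k : ℝ)]

theorem sum_range_div_mul_zpow_le {b : ℕ → ℝ} {k : ℕ} {c r x : ℝ} (hr : 0 < r) (hx : 0 < x)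
    (hbk : 0 < b k) (hb : ∀ j < k, b j ≤ c * k.choose j * r ^ (k - j) * b k) :
    ∑ j ∈ range k, b j / b k * (x * r) ^ ((j : ℤ) - k) ≤ c * ((1 + x⁻¹) ^ k - 1) := by
  rw [← sum_range_choose_mul_pow_sub, mul_sum]
  refine sum_le_sum fun j hj => ?_
  have hjk := mem_range.1 hj
  have hexp : (j : ℤ) - k = -((k - j : ℕ) : ℤ) := by omega
  have hxr : (x * r) ^ ((j : ℤ) - k) = x⁻¹ ^ (k - j) / r ^ (k - j) := by
    rw [hexp, zpow_neg, zpow_natCast, mul_pow, mul_inv, inv_pow, div_eq_mul_inv]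
  rw [hxr, div_mul_div_comm, div_le_iff₀ (by positivity)]
  calc b j * x⁻¹ ^ (k - j) ≤ c * k.choose j * r ^ (k - j) * b k * x⁻¹ ^ (k - j) := by
        gcongr; exact hb j hjk
    _ = _ := by ring

namespace Polynomial

theorem iterate_derivative_eval_eq_factorial_mul_coeff_taylor {R : Type*}
    [CommSemiring R] (F : R[X]) (m : R) (j : ℕ) :
    (derivative^[j] F).eval m = j ! * (taylor m F).coeff j := by
  rw [taylor_coeff, ← factorial_smul_hasseDeriv, LinearMap.smul_apply, eval_smul, nsmul_eq_mul]

theorem taylor_C_mul_prod_X_sub_C {R ι : Type*} [CommRing R] (a m : R) (s : Finset ι)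
    (z : ι → R) :
    taylor m (C a * ∏ i ∈ s, (X - C (z i))) = C a * ∏ i ∈ s, (X - C (z i - m)) := by
  change taylorAlgHom m _ = _
  rw [map_mul, map_prod]
  simp [taylor_C, taylor_X, C_sub, sub_sub_eq_add_sub]

theorem coeff_mul_eq_sum_range {R : Type*} [CommSemiring R] (P Q : R[X]) (j : ℕ) :
    (P * Q).coeff j = ∑ t ∈ range (j + 1), P.coeff (j - t) * Q.coeff t := by
  rw [mul_comm, coeff_mul, Nat.sum_antidiagonal_eq_sum_range_succ fun t i => Q.coeff t * P.coeff i]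
  simp only [mul_comm]

section Roots

variable {ι 𝕜 : Type*} [NormedField 𝕜]

theorem norm_coeff_prod_X_sub_C_le_sum (s : Finset ι) (w : ι → 𝕜) {j : ℕ} (hj : j ≤ #s) :
    ‖(∏ i ∈ s, (X - C (w i))).coeff j‖ ≤ ∑ t ∈ s.powersetCard (#s - j), ∏ i ∈ t, ‖w i‖ := by
  simp_rw [sub_eq_add_neg, ← C_neg]
  rw [Finset.prod_X_add_C_coeff _ _ hj]
  refine (norm_sum_le _ _).trans_eq ?_
  simp only [norm_prod, norm_neg]

theorem coeff_prod_X_sub_C_of_card_lt (s : Finset ι) (w : ι → 𝕜) {j : ℕ} (hj : #s < j) :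
    (∏ i ∈ s, (X - C (w i))).coeff j = 0 :=
  coeff_eq_zero_of_natDegree_lt (by rwa [natDegree_finsetProd_X_sub_C_eq_card])

theorem norm_coeff_prod_X_sub_C_le_of_norm_le {s : Finset ι} {w : ι → 𝕜} {ρ : ℝ}
    (hw : ∀ i ∈ s, ‖w i‖ ≤ ρ) (j : ℕ) :
    ‖(∏ i ∈ s, (X - C (w i))).coeff j‖ ≤ (#s).choose j * ρ ^ (#s - j) := by
  rcases le_or_gt j #s with hj | hj
  · calc _ ≤ ∑ t ∈ s.powersetCard (#s - j), ∏ i ∈ t, ‖w i‖ :=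
          norm_coeff_prod_X_sub_C_le_sum s w hj
      _ ≤ ∑ t ∈ s.powersetCard (#s - j), ρ ^ (#s - j) := by
          refine sum_le_sum fun t ht => ?_
          rw [mem_powersetCard] at ht
          rw [← ht.2, ← prod_const]
          exact prod_le_prod (fun i _ => norm_nonneg _) fun i hi => hw i (ht.1 hi)
      _ = _ := by rw [sum_const, card_powersetCard, Nat.choose_symm hj, nsmul_eq_mul]
  · simp [coeff_prod_X_sub_C_of_card_lt s w hj, Nat.choose_eq_zero_of_lt hj]

theorem norm_coeff_prod_X_sub_C_mul_pow_le_of_le_norm {s : Finset ι} {w : ι → 𝕜} {ρ : ℝ}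
    (hρ : 0 ≤ ρ) (hw : ∀ i ∈ s, ρ ≤ ‖w i‖) (j : ℕ) :
    ‖(∏ i ∈ s, (X - C (w i))).coeff j‖ * ρ ^ j ≤ (#s).choose j * ∏ i ∈ s, ‖w i‖ := by
  classical
  rcases le_or_gt j #s with hj | hj
  · calc _ ≤ (∑ t ∈ s.powersetCard (#s - j), ∏ i ∈ t, ‖w i‖) * ρ ^ j := by
          gcongr
          exact norm_coeff_prod_X_sub_C_le_sum s w hj
      _ ≤ ∑ t ∈ s.powersetCard (#s - j), ∏ i ∈ s, ‖w i‖ := by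
          rw [sum_mul]
          refine sum_le_sum fun t ht => ?_
          rw [mem_powersetCard] at ht
          -- the roots left out of `t` are `j` roots of norm at least `ρ`
          have hcard : #(s \ t) = j := by rw [card_sdiff_of_subset ht.1, ht.2]; omega
          rw [← prod_sdiff ht.1, mul_comm, ← hcard, ← prod_const]
          gcongr with i hi
          exact hw i (mem_sdiff.1 hi).1
      _ = _ := by rw [sum_const, card_powersetCard, Nat.choose_symm hj, nsmul_eq_mul]
  · simp [coeff_prod_X_sub_C_of_card_lt s w hj, Nat.choose_eq_zero_of_lt hj]

theorem norm_coeff_zero_prod_X_sub_C_s13 (s : Finset ι) (w : ι → 𝕜) :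
    ‖(∏ i ∈ s, (X - C (w i))).coeff 0‖ = ∏ i ∈ s, ‖w i‖ := by
  simp [coeff_zero_eq_eval_zero, eval_prod, norm_prod]

theorem norm_coeff_prod_X_sub_C_sub_le_of_norm_le {s : Finset ι} {w : ι → 𝕜} {r : ℝ}
    (hr : 0 ≤ r) (hw : ∀ i ∈ s, ‖w i‖ ≤ r) {j t : ℕ} (htj : t ≤ j) (hjs : j ≤ #s) :
    ‖(∏ i ∈ s, (X - C (w i))).coeff (j - t)‖ ≤ (#s).choose j * r ^ (#s - j) * (#s * r) ^ t :=
  calc _ ≤ (#s).choose (j - t) * r ^ (#s - (j - t)) :=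
        norm_coeff_prod_X_sub_C_le_of_norm_le hw _
    _ ≤ ((#s).choose j * (#s : ℝ) ^ t) * (r ^ (#s - j) * r ^ t) := by
        rw [← pow_add, show #s - j + t = #s - (j - t) by omega]
        gcongr
        exact_mod_cast Nat.choose_sub_le_choose_mul_pow htj hjs
    _ = _ := by ring

theorem norm_coeff_prod_X_sub_C_mul_pow_le_of_card_mul_le {s : Finset ι} {w : ι → 𝕜}
    {ρ σ ε : ℝ} (hρ : 0 < ρ) (hw : ∀ i ∈ s, ρ ≤ ‖w i‖) (hσ : 0 ≤ σ) (hsσ : #s * σ ≤ ε * ρ)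
    (t : ℕ) :
    ‖(∏ i ∈ s, (X - C (w i))).coeff t‖ * σ ^ t ≤ ‖(∏ i ∈ s, (X - C (w i))).coeff 0‖ * ε ^ t := by
  rw [norm_coeff_zero_prod_X_sub_C_s13]
  have hratio : #s * σ / ρ ≤ ε := by rwa [div_le_iff₀ hρ]
  calc _ = ‖(∏ i ∈ s, (X - C (w i))).coeff t‖ * ρ ^ t * (σ / ρ) ^ t := by
        rw [div_pow, mul_assoc, mul_div_cancel₀ _ (by positivity)]
    _ ≤ (#s).choose t * (∏ i ∈ s, ‖w i‖) * (σ / ρ) ^ t := by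
        gcongr ?_ * _
        exact norm_coeff_prod_X_sub_C_mul_pow_le_of_le_norm hρ.le hw t
    _ ≤ (#s : ℝ) ^ t * (∏ i ∈ s, ‖w i‖) * (σ / ρ) ^ t := by
        gcongr; exact_mod_cast Nat.choose_le_pow _ _
    _ = (∏ i ∈ s, ‖w i‖) * (#s * σ / ρ) ^ t := by ring
    _ ≤ (∏ i ∈ s, ‖w i‖) * ε ^ t := by gcongr

end Roots

section TwoScale

/- `hP` and `hQ` say that the roots of `P` live at scale `r` and those of `Q` at scale `s / ε`. -/

variable {𝕜 : Type*} [NormedField 𝕜] {P Q : 𝕜[X]} {k : ℕ} {r s ε : ℝ}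
  (hP : ∀ j t, t ≤ j → j ≤ k → ‖P.coeff (j - t)‖ ≤ k.choose j * r ^ (k - j) * s ^ t)
  (hQ : ∀ t, ‖Q.coeff t‖ * s ^ t ≤ ‖Q.coeff 0‖ * ε ^ t)
include hP hQ

theorem norm_coeff_mul_coeff_le_of_two_scale (hr : 0 ≤ r) {j t : ℕ} (htj : t ≤ j)
    (hjk : j ≤ k) :
    ‖P.coeff (j - t) * Q.coeff t‖ ≤ k.choose j * r ^ (k - j) * ‖Q.coeff 0‖ * ε ^ t :=
  calc ‖P.coeff (j - t) * Q.coeff t‖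
      ≤ k.choose j * r ^ (k - j) * s ^ t * ‖Q.coeff t‖ := by
        rw [norm_mul]; exact mul_le_mul_of_nonneg_right (hP j t htj hjk) (norm_nonneg _)
    _ = k.choose j * r ^ (k - j) * (‖Q.coeff t‖ * s ^ t) := by ring
    _ ≤ k.choose j * r ^ (k - j) * (‖Q.coeff 0‖ * ε ^ t) :=
        mul_le_mul_of_nonneg_left (hQ t) (by positivity)
    _ = _ := by ring

theorem norm_coeff_mul_mul_one_sub_le_of_two_scale (hr : 0 ≤ r) (hε₀ : 0 ≤ ε) (hε₁ : ε ≤ 1)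
    {j : ℕ} (hjk : j ≤ k) :
    ‖(P * Q).coeff j‖ * (1 - ε) ≤ k.choose j * r ^ (k - j) * ‖Q.coeff 0‖ := by
  have hgeom : (∑ t ∈ range (j + 1), ε ^ t) * (1 - ε) ≤ 1 := by
    rw [geom_sum_mul_neg]; linarith [pow_nonneg hε₀ (j + 1)]
  calc ‖(P * Q).coeff j‖ * (1 - ε)
      ≤ (∑ t ∈ range (j + 1), k.choose j * r ^ (k - j) * ‖Q.coeff 0‖ * ε ^ t) * (1 - ε) := by
        rw [coeff_mul_eq_sum_range]
        gcongr
        refine (norm_sum_le _ _).trans (sum_le_sum fun t ht => ?_)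
        exact norm_coeff_mul_coeff_le_of_two_scale hP hQ hr
          (Nat.lt_succ_iff.1 (mem_range.1 ht)) hjk
    _ = k.choose j * r ^ (k - j) * ‖Q.coeff 0‖ * ((∑ t ∈ range (j + 1), ε ^ t) * (1 - ε)) := by
        rw [← mul_sum]; ring
    _ ≤ k.choose j * r ^ (k - j) * ‖Q.coeff 0‖ :=
        mul_le_of_le_one_right (by positivity) hgeom

theorem norm_coeff_zero_mul_le_of_two_scale (hr : 0 ≤ r) (hε₀ : 0 ≤ ε) (hε₁ : ε ≤ 1)
    (hPk : P.coeff k = 1) :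
    ‖Q.coeff 0‖ * (1 - 2 * ε) ≤ ‖(P * Q).coeff k‖ * (1 - ε) := by
  set tail := ∑ t ∈ range k, P.coeff (k - (t + 1)) * Q.coeff (t + 1)
  have hsplit : (P * Q).coeff k = tail + Q.coeff 0 := by
    rw [coeff_mul_eq_sum_range, sum_range_succ', Nat.sub_zero, hPk, one_mul]
  have htail : ‖tail‖ ≤ ‖Q.coeff 0‖ * ε * ∑ t ∈ range k, ε ^ t := by
    rw [mul_sum]
    refine (norm_sum_le _ _).trans (sum_le_sum fun t ht => ?_)
    have := norm_coeff_mul_coeff_le_of_two_scale hP hQ hr (mem_range.1 ht) le_rfl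
    rw [Nat.choose_self, Nat.sub_self, pow_zero, Nat.cast_one, one_mul, one_mul] at this
    rw [pow_succ'] at this
    linarith
  have hgeom : (∑ t ∈ range k, ε ^ t) * (1 - ε) ≤ 1 := by
    rw [geom_sum_mul_neg]; linarith [pow_nonneg hε₀ k]
  have hQ0 : ‖Q.coeff 0‖ ≤ ‖(P * Q).coeff k‖ + ‖tail‖ := by
    rw [hsplit]; exact norm_le_add_norm_add' _ _
  have h1ε : 0 ≤ 1 - ε := by linarith
  nlinarith [mul_le_mul_of_nonneg_right hQ0 h1ε, mul_le_mul_of_nonneg_right htail h1ε,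
    mul_le_mul_of_nonneg_left hgeom (mul_nonneg (norm_nonneg (Q.coeff 0)) hε₀)]

theorem norm_coeff_mul_le_of_two_scale (hr : 0 ≤ r) (hε₀ : 0 ≤ ε) (hε : 2 * ε < 1)
    (hPk : P.coeff k = 1) {j : ℕ} (hjk : j ≤ k) :
    ‖(P * Q).coeff j‖ * (1 - 2 * ε) ≤ k.choose j * r ^ (k - j) * ‖(P * Q).coeff k‖ := by
  have hupper := norm_coeff_mul_mul_one_sub_le_of_two_scale hP hQ hr hε₀ (by linarith) hjk
  have hlower := norm_coeff_zero_mul_le_of_two_scale hP hQ hr hε₀ (by linarith) hPk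
  refine le_of_mul_le_mul_right ?_ (by linarith : 0 < 1 - ε)
  calc ‖(P * Q).coeff j‖ * (1 - 2 * ε) * (1 - ε)
      = ‖(P * Q).coeff j‖ * (1 - ε) * (1 - 2 * ε) := by ring
    _ ≤ k.choose j * r ^ (k - j) * ‖Q.coeff 0‖ * (1 - 2 * ε) := by gcongr
    _ = k.choose j * r ^ (k - j) * (‖Q.coeff 0‖ * (1 - 2 * ε)) := by ring
    _ ≤ k.choose j * r ^ (k - j) * (‖(P * Q).coeff k‖ * (1 - ε)) := by gcongr
    _ = _ := by ring

end TwoScale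

theorem norm_coeff_mul_le_of_isolated {𝕜 ι : Type*} [NormedField 𝕜] {s t : Finset ι}
    {w : ι → 𝕜} {r ρ : ℝ} (hr : 0 ≤ r) (hρ : 0 < ρ) (hsep : 16 * #s * #t * r ≤ ρ)
    (hs : ∀ i ∈ s, ‖w i‖ ≤ r) (ht : ∀ i ∈ t, ρ ≤ ‖w i‖) :
    0 < ‖((∏ i ∈ s, (X - C (w i))) * ∏ i ∈ t, (X - C (w i))).coeff #s‖ ∧
      ∀ j < #s, ‖((∏ i ∈ s, (X - C (w i))) * ∏ i ∈ t, (X - C (w i))).coeff j‖ ≤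
        8 / 7 * (#s).choose j * r ^ (#s - j) *
          ‖((∏ i ∈ s, (X - C (w i))) * ∏ i ∈ t, (X - C (w i))).coeff #s‖ := by
  have hP := fun (j l : ℕ) (hlj : l ≤ j) (hjs : j ≤ #s) =>
    norm_coeff_prod_X_sub_C_sub_le_of_norm_le hr hs hlj hjs
  have hQ := norm_coeff_prod_X_sub_C_mul_pow_le_of_card_mul_le (ε := 1 / 16) hρ ht
    (by positivity : 0 ≤ (#s : ℝ) * r) (by linarith)
  have hPk : (∏ i ∈ s, (X - C (w i))).coeff #s = 1 := by
    simpa using (monic_prod_X_sub_C w s).coeff_natDegree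
  have hQ₀ : 0 < ‖(∏ i ∈ t, (X - C (w i))).coeff 0‖ := by
    rw [norm_coeff_zero_prod_X_sub_C_s13]
    exact prod_pos fun i hi => hρ.trans_le (ht i hi)
  refine ⟨?_, fun j hj => ?_⟩
  · have := norm_coeff_zero_mul_le_of_two_scale hP hQ hr (by norm_num) (by norm_num) hPk
    nlinarith
  · have := norm_coeff_mul_le_of_two_scale hP hQ hr (by norm_num) (by norm_num) hPk hj.le
    linarith

end Polynomial

/-- **Head estimate for the Taylor coefficients at `m`** (second appendix lemma):
if `D(m,r)` is `(1, λ)`-isolating for the roots `z_1, …, z_k` of `F = a·∏ (X − z_i)`,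
with `λ ≥ 16K·max(1,k)²·n`, then `F^{(k)}(m) ≠ 0` and
`∑_{i=0}^{k−1} (|F^{(i)}(m)|/|F^{(k)}(m)|)·(c₁nr)^{i−k}·k!/i! < 1/(2K)`. -/
theorem taylor_head_small (n : ℕ) (hn : 2 ≤ n) (a : ℂ) (ha : a ≠ 0) (z : ℕ → ℂ)
    (F : Polynomial ℂ)
    (hF : F = Polynomial.C a * ∏ i ∈ Finset.range n, (Polynomial.X - Polynomial.C (z i)))
    (k : ℕ) (hk : k ≤ n) (K : ℝ) (hK : 1 ≤ K) (c₁ : ℝ)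
    (hc₁ : max 1 (k : ℝ) / Real.log (1 + 1 / (8 * K)) ≤ c₁ * n)
    (lam : ℝ) (hlam : 16 * K * (max 1 (k : ℝ)) ^ 2 * n ≤ lam)
    (m : ℂ) (r : ℝ) (hr : 0 < r)
    (hin : ∀ i, i < k → ‖z i - m‖ < r)
    (hout : ∀ i, k ≤ i → i < n → lam * r ≤ ‖z i - m‖) :
    (Polynomial.derivative^[k] F).eval m ≠ 0 ∧
    ∑ i ∈ Finset.range k,
        (‖(Polynomial.derivative^[i] F).eval m‖ /
            ‖(Polynomial.derivative^[k] F).eval m‖) *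
          (c₁ * n * r) ^ ((i : ℤ) - (k : ℤ)) *
          (Nat.factorial k / Nat.factorial i : ℝ) <
      1 / (2 * K) := by
  set P := ∏ i ∈ range k, (X - C (z i - m))
  set Q := ∏ i ∈ Ico k n, (X - C (z i - m))
  have hder : ∀ j, (derivative^[j] F).eval m = j ! * (a * (P * Q).coeff j) := fun j => by
    rw [iterate_derivative_eval_eq_factorial_mul_coeff_taylor, hF, taylor_C_mul_prod_X_sub_C,
      coeff_C_mul, prod_range_mul_prod_Ico _ hk]
  have hK₀ : 0 < K := by linarith
  have hlam₀ : 0 < lam := lt_of_lt_of_le (by positivity) hlam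
  have hsep : 16 * #(range k) * #(Ico k n) * r ≤ lam * r := by
    have hkM : (k : ℝ) ≤ K * max 1 (k : ℝ) ^ 2 := by
      nlinarith [le_max_left 1 (k : ℝ), le_max_right 1 (k : ℝ)]
    have hnk : (#(Ico k n) : ℝ) ≤ n := by simp
    rw [card_range]
    calc 16 * (k : ℝ) * #(Ico k n) * r ≤ 16 * (K * max 1 (k : ℝ) ^ 2) * n * r := by gcongr
      _ ≤ lam * r := by gcongr; linarith
  obtain ⟨hHk, hratio⟩ := norm_coeff_mul_le_of_isolated hr.le (mul_pos hlam₀ hr) hsep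
    (fun i hi => (hin i (mem_range.1 hi)).le)
    (fun i hi => hout i (mem_Ico.1 hi).1 (mem_Ico.1 hi).2)
  rw [card_range] at hHk hratio
  obtain ⟨hx, hexp⟩ := Real.one_add_inv_pow_le_of_div_log_le (by positivity) hc₁
  refine ⟨?_, ?_⟩
  · rw [hder]
    exact mul_ne_zero (by simp [k.factorial_ne_zero]) (mul_ne_zero ha (norm_pos_iff.1 hHk))
  · calc _ = ∑ j ∈ range k,
          ‖(P * Q).coeff j‖ / ‖(P * Q).coeff k‖ * (c₁ * n * r) ^ ((j : ℤ) - k) :=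
          sum_congr rfl fun j _ => by
            simp only [hder, norm_mul, Complex.norm_natCast]
            field_simp
      _ ≤ 8 / 7 * ((1 + (c₁ * n)⁻¹) ^ k - 1) := sum_range_div_mul_zpow_le hr hx hHk hratio
      _ ≤ 8 / 7 * (1 / (8 * K)) := by gcongr; linarith
      _ < 1 / (2 * K) := by field_simp; linarith
end

section
/- Let w, w' ∈ ℝ with w > w' > 0 and let m be a positive integer. Let (x_i, n_i)_{i ≥ 1} be a sequence with x_1 = w, n_1 = m, and such that for every i ≥ 1, writing N_i := 2^{2^{n_i}}: if x_i / N_i ≥ w', then 0 ≤ x_{i+1} ≤ x_i / N_i and n_{i+1} = n_i + 1; and if x_i / N_i < w', then 0 ≤ x_{i+1} ≤ x_i / 2 and n_{i+1} = max(1, n_i − 1). Then there exists an index i₀ ≤ 8·(m + log₂ log₂ max(4, w/w')) with x_{i₀} ≤ w'; in particular, the smallest such index is at most 8·(m + log₂ log₂ max(4, w/w')). -/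
/-!
Quadratic steps only shrink `x`, so as long as they continue `x_i ≤ w`, and a quadratic step at
level `n` needs `w' · 2^(2^n) ≤ w`, i.e. `n ≤ log₂ log₂ (w / w')`; since each one raises `n`, the
initial run of quadratic steps is short. At the first linear step `x_i < w' N_i ≤ w' N_i²`, and
this invariant `x_i < w' N_i²` is kept while the level drops: a linear step lowers `n` by one, and
a quadratic step gives `x_{i+1} < w' N_i` at level `n + 1`, where `N_{i+1} = N_i²` forces two
linear steps back down to level `n - 1`. So each level costs at most three steps, and at level `1`
two linear steps end below `w'`: from the first linear step on, at most `3 n_i + 4` steps remain.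
-/

open Real

namespace QIR

def N (k : ℕ) : ℝ := 2 ^ 2 ^ k

lemma N_pos (k : ℕ) : 0 < N k := by unfold N; positivity

lemma N_succ (k : ℕ) : N (k + 1) = N k * N k := by
  rw [N, N, pow_succ, pow_mul, sq]

lemma N_strictMono : StrictMono N := fun _ _ h =>
  pow_lt_pow_right₀ one_lt_two (Nat.pow_lt_pow_right one_lt_two h)

lemma one_le_N (k : ℕ) : 1 ≤ N k := one_le_pow₀ one_le_two

lemma N_le_four {k : ℕ} (hk : k ≤ 1) : N k ≤ 4 := by
  calc N k ≤ N 1 := N_strictMono.monotone hk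
    _ = 4 := by norm_num [N]

lemma lt_N_floor_logb_logb_add_one {K : ℝ} (hK : 1 < K) :
    K < N (⌊logb 2 (logb 2 K)⌋₊ + 1) := by
  set j := ⌊logb 2 (logb 2 K)⌋₊ + 1
  have hlogK : logb 2 K < ((2 ^ j : ℕ) : ℝ) := by
    have h := Nat.lt_floor_add_one (logb 2 (logb 2 K))
    rw [logb_lt_iff_lt_rpow one_lt_two (logb_pos one_lt_two hK)] at h
    exact_mod_cast h
  rwa [logb_lt_iff_lt_rpow one_lt_two (by linarith), rpow_natCast] at hlogK

structure IsQIRSequence (w' : ℝ) (x : ℕ → ℝ) (n : ℕ → ℕ) : Prop where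
  quad : ∀ i, w' * N (n i) ≤ x i → x (i + 1) ≤ x i / N (n i) ∧ n (i + 1) = n i + 1
  lin : ∀ i, x i < w' * N (n i) → x (i + 1) ≤ x i / 2 ∧ n (i + 1) = max 1 (n i - 1)

namespace IsQIRSequence

variable {w' : ℝ} {x : ℕ → ℝ} {n : ℕ → ℕ}

lemma one_le_succ (h : IsQIRSequence w' x n) (i : ℕ) : 1 ≤ n (i + 1) := by
  by_cases hq : w' * N (n i) ≤ x i
  · rw [(h.quad i hq).2]; omega
  · rw [(h.lin i (not_le.mp hq)).2]; omega

lemma linear_step_cases (h : IsQIRSequence w' x n) (hw' : 0 < w') {i : ℕ}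
    (hx : x i < w' * N (n i)) :
    x (i + 2) < w' ∨ n (i + 1) < n i ∧ x (i + 1) < w' * N (n (i + 1) + 1) := by
  obtain ⟨hx₁, hn₁⟩ := h.lin i hx
  have hwN : 0 < w' * N (n i) := mul_pos hw' (N_pos _)
  by_cases hni : 2 ≤ n i
  · right
    have hn : n (i + 1) + 1 = n i := by omega
    exact ⟨by omega, by rw [hn]; linarith⟩
  · left
    have hN : w' * N (n i) ≤ w' * 4 := mul_le_mul_of_nonneg_left (N_le_four (by omega)) hw'.le
    have hlin : x (i + 1) < w' * N (n (i + 1)) := by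
      rw [show n (i + 1) = 1 by omega, show N 1 = 4 by norm_num [N]]
      linarith
    have hx₂ : x (i + 2) ≤ x (i + 1) / 2 := (h.lin (i + 1) hlin).1
    linarith

lemma quad_step_then_linear (h : IsQIRSequence w' x n) (hw' : 0 < w') {i : ℕ}
    (hq : w' * N (n i) ≤ x i) (hx : x i < w' * N (n i + 1)) :
    n (i + 2) = max 1 (n i) ∧ x (i + 2) < w' * N (n (i + 2)) := by
  obtain ⟨hx₁, hn₁⟩ := h.quad i hq
  have hN := N_pos (n i)
  have hx₁N : x (i + 1) < w' * N (n i) :=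
    hx₁.trans_lt ((div_lt_iff₀ hN).mpr (by rwa [N_succ, ← mul_assoc] at hx))
  have hmono : ∀ {a b}, a ≤ b → w' * N a ≤ w' * N b := fun hab =>
    mul_le_mul_of_nonneg_left (N_strictMono.monotone hab) hw'.le
  have hlin : x (i + 1) < w' * N (n (i + 1)) := hx₁N.trans_le (hmono (by omega))
  obtain ⟨hx₂, hn₂⟩ := h.lin (i + 1) hlin
  have hn : n (i + 2) = max 1 (n i) := by rw [hn₂, hn₁, Nat.add_sub_cancel]
  have hwN : w' * N (n i) ≤ w' * N (n (i + 2)) := hmono (by omega)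
  exact ⟨hn, by linarith [mul_pos hw' hN]⟩

theorem exists_le_of_lt_N_succ (h : IsQIRSequence w' x n) (hw' : 0 < w') (i : ℕ)
    (hx : x i < w' * N (n i + 1)) : ∃ k ≤ 3 * n i + 4, x (i + k) ≤ w' := by
  induction hν : n i using Nat.strong_induction_on generalizing i with
  | _ ν ih =>
  subst hν
  by_cases hq : w' * N (n i) ≤ x i
  · obtain ⟨hn₂, hx₂⟩ := h.quad_step_then_linear hw' hq hx
    rcases h.linear_step_cases hw' hx₂ with hdone | ⟨hn₃, hx₃⟩
    · exact ⟨4, by omega, hdone.le⟩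
    · have := h.one_le_succ (i + 2)
      obtain ⟨k, hk, hxk⟩ := ih (n (i + 2 + 1)) (by omega) (i + 2 + 1) hx₃ rfl
      exact ⟨k + 3, by omega, by rwa [show i + (k + 3) = i + 2 + 1 + k by omega]⟩
  · rcases h.linear_step_cases hw' (not_le.mp hq) with hdone | ⟨hn₁, hx₁⟩
    · exact ⟨2, by omega, hdone.le⟩
    · obtain ⟨k, hk, hxk⟩ := ih (n (i + 1)) hn₁ (i + 1) hx₁ rfl
      exact ⟨k + 1, by omega, by rwa [show i + (k + 1) = i + 1 + k by omega]⟩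

theorem exists_le_of_le {w : ℝ} {Λ : ℕ} (h : IsQIRSequence w' x n) (hw' : 0 < w')
    (hΛ : w < w' * N (Λ + 1)) (i : ℕ) (hx : x i ≤ w) :
    ∃ k, k + n i ≤ 4 * max (n i) (Λ + 1) + 4 ∧ x (i + k) ≤ w' := by
  induction hd : Λ + 1 - n i using Nat.strong_induction_on generalizing i with
  | _ d ih =>
  subst hd
  by_cases hq : w' * N (n i) ≤ x i
  · obtain ⟨hx₁, hn₁⟩ := h.quad i hq
    have hlt : n i < Λ + 1 :=
      N_strictMono.lt_iff_lt.mp (lt_of_mul_lt_mul_left (hq.trans_lt (hx.trans_lt hΛ)) hw'.le)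
    have hx₁w : x (i + 1) ≤ w :=
      hx₁.trans ((div_le_self (by nlinarith [N_pos (n i)]) (one_le_N _)).trans hx)
    obtain ⟨k, hk, hxk⟩ := ih _ (by omega) (i + 1) hx₁w rfl
    exact ⟨k + 1, by omega, by rwa [show i + (k + 1) = i + 1 + k by omega]⟩
  · have hinv : x i < w' * N (n i + 1) := (not_le.mp hq).trans_le
      (mul_le_mul_of_nonneg_left (N_strictMono.monotone (Nat.le_succ _)) hw'.le)
    obtain ⟨k, hk, hxk⟩ := h.exists_le_of_lt_N_succ hw' i hinv
    exact ⟨k, by omega, hxk⟩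

end IsQIRSequence

end QIR

open QIR in
theorem qir_sequence_lemma_general (w w' : ℝ) (hw' : 0 < w')
    (m : ℕ) (hm : 1 ≤ m) (x : ℕ → ℝ) (nn : ℕ → ℕ)
    (hx1 : x 1 = w) (hn1 : nn 1 = m)
    (hstep : ∀ i, 1 ≤ i →
      (if w' ≤ x i / (2 : ℝ) ^ (2 ^ nn i) then
        0 ≤ x (i + 1) ∧ x (i + 1) ≤ x i / (2 : ℝ) ^ (2 ^ nn i) ∧ nn (i + 1) = nn i + 1
      else
        0 ≤ x (i + 1) ∧ x (i + 1) ≤ x i / 2 ∧ nn (i + 1) = max 1 (nn i - 1))) :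
    ∃ i₀ : ℕ, 1 ≤ i₀ ∧
      (i₀ : ℝ) ≤ 8 * ((m : ℝ) + Real.logb 2 (Real.logb 2 (max 4 (w / w')))) ∧
      x i₀ ≤ w' := by
  have hseq : IsQIRSequence w' (fun i => x (i + 1)) (fun i => nn (i + 1)) := by
    constructor <;> intro i hi <;> have hs := hstep (i + 1) (by omega)
    · rw [← le_div_iff₀ (N_pos _), N] at hi
      rw [if_pos hi] at hs
      exact hs.2
    · rw [← div_lt_iff₀ (N_pos _), N] at hi
      rw [if_neg (not_le.mpr hi)] at hs
      exact hs.2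
  set K := max 4 (w / w')
  have hK : 4 ≤ K := le_max_left _ _
  have hL : 0 ≤ logb 2 (logb 2 K) :=
    logb_nonneg one_lt_two ((le_logb_iff_rpow_le one_lt_two (by linarith)).mpr (by norm_num; linarith))
  have hw : w < w' * N (⌊logb 2 (logb 2 K)⌋₊ + 1) :=
    (div_lt_iff₀' hw').mp ((le_max_right 4 _).trans_lt (lt_N_floor_logb_logb_add_one (by linarith)))
  obtain ⟨k, hk, hxk⟩ := hseq.exists_le_of_le hw' hw 0 hx1.le
  simp only [zero_add, hn1] at hk hxk
  have hΛ := Nat.floor_le hL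
  have hk' : k + 1 ≤ 8 * (m + ⌊logb 2 (logb 2 K)⌋₊) := by omega
  refine ⟨k + 1, by omega, ?_, hxk⟩
  calc ((k + 1 : ℕ) : ℝ) ≤ ((8 * (m + ⌊logb 2 (logb 2 K)⌋₊) : ℕ) : ℝ) := by exact_mod_cast hk'
    _ ≤ 8 * ((m : ℝ) + logb 2 (logb 2 K)) := by push_cast; linarith

/-- **The abstract QIR sequence lemma** (Lemma 25 of Sagraloff 2016): for a sequence
`(x_i, n_i)_{i ≥ 1}` with `x_1 = w`, `n_1 = m`, where (writing `N_i := 2^{2^{n_i}}`)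
a quadratic step `x_{i+1} ≤ x_i/N_i`, `n_{i+1} = n_i + 1` is taken whenever
`x_i/N_i ≥ w'`, and otherwise a linear step `x_{i+1} ≤ x_i/2`, `n_{i+1} = max(1, n_i − 1)`
is taken, there is an index `i₀ ≤ 8·(m + log₂ log₂ max(4, w/w'))` with `x_{i₀} ≤ w'`. -/
theorem qir_sequence_lemma (w w' : ℝ) (hw' : 0 < w') (hww' : w' < w)
    (m : ℕ) (hm : 1 ≤ m) (x : ℕ → ℝ) (nn : ℕ → ℕ)
    (hx1 : x 1 = w) (hn1 : nn 1 = m)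
    (hstep : ∀ i, 1 ≤ i →
      (if w' ≤ x i / (2 : ℝ) ^ (2 ^ nn i) then
        0 ≤ x (i + 1) ∧ x (i + 1) ≤ x i / (2 : ℝ) ^ (2 ^ nn i) ∧ nn (i + 1) = nn i + 1
      else
        0 ≤ x (i + 1) ∧ x (i + 1) ≤ x i / 2 ∧ nn (i + 1) = max 1 (nn i - 1))) :
    ∃ i₀ : ℕ, 1 ≤ i₀ ∧
      (i₀ : ℝ) ≤ 8 * ((m : ℝ) + Real.logb 2 (Real.logb 2 (max 4 (w / w')))) ∧
      x i₀ ≤ w' :=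
  qir_sequence_lemma_general w w' hw' m hm x nn hx1 hn1 hstep
end

section
/- Let F = a·∏_{i=1}^n (X − z_i) ∈ ℂ[X] with a ≠ 0 and n = deg F ≥ 2, where z_1,…,z_n are the roots listed with multiplicity. Let k be an integer with 1 ≤ k ≤ n, let m'' ∈ ℂ, r > 0, N ∈ ℝ with N ≥ 1, and let x ∈ ℂ. Assume: |x − m''| ≤ 4r; |z_i − m''| ≤ r/(2^{20}·n·N) for 1 ≤ i ≤ k; |x − z_i| ≥ r/(27·n) for 1 ≤ i ≤ k; and |x − z_i| ≥ 2^{19}·n²·N·r for k < i ≤ n. Then F(x) ≠ 0, F'(x) ≠ 0, |(x − m'')·F'(x)/(k·F(x)) − 1| ≤ 2^{−14}/N, and the Newton iterate x' := x − k·F(x)/F'(x) satisfies |x' − m''| ≤ r/(2^{11}·N). -/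
open Polynomial Finset

/-!
Since `F'(x)/F(x) = ∑ 1/(x - z_i)`, the quantity `u = (x - m'')·F'(x)/(k·F(x))` satisfies
`k·(u - 1) = ∑_{i<k} (z_i - m'')/(x - z_i) + (x - m'')·∑_{i≥k} 1/(x - z_i)`.
Each cluster term is at most `27/(2^20 N)` because the cluster radius is tiny compared with the
distance from `x` to the cluster, and the far roots contribute at most `4/(2^19 n N)` in total,
so `|u - 1| ≤ 2^{-14}/N`. The Newton iterate then satisfies `x' - m'' = (x - m'')(u - 1)/u`,
which is at most `2·4r·2^{-14}/N`.
-/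

theorem eval_derivative_prod_X_sub_C {K ι : Type*} [Field K] {s : Finset ι} {z : ι → K} {x : K}
    (hx : ∀ i ∈ s, x ≠ z i) :
    (derivative (∏ i ∈ s, (X - C (z i)))).eval x =
      (∏ i ∈ s, (X - C (z i))).eval x * ∑ i ∈ s, (x - z i)⁻¹ := by
  classical
  simp only [derivative_prod_finset, derivative_X_sub_C, mul_one, eval_finsetSum, eval_prod,
    eval_sub, eval_X, eval_C, Finset.mul_sum]
  refine sum_congr rfl fun i hi => ?_
  rw [← prod_erase_mul s _ hi, mul_inv_cancel_right₀ (sub_ne_zero.2 (hx i hi))]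

theorem sub_mul_sum_inv_sub_sub_natCast {K : Type*} [Field K] {k n : ℕ} (hk : k ≤ n)
    {z : ℕ → K} {x m : K} (hx : ∀ i < k, x ≠ z i) :
    (x - m) * ∑ i ∈ range n, (x - z i)⁻¹ - k =
      ∑ i ∈ range k, (z i - m) / (x - z i) + (x - m) * ∑ i ∈ Ico k n, (x - z i)⁻¹ := by
  have hterm : ∀ i ∈ range k, (x - m) * (x - z i)⁻¹ - 1 = (z i - m) / (x - z i) := by
    intro i hi
    have := sub_ne_zero.2 (hx i (mem_range.1 hi))
    field_simp
    ring
  rw [← sum_range_add_sum_Ico _ hk, mul_add, ← sum_congr rfl hterm, sum_sub_distrib, mul_sum,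
    sum_const, card_range, nsmul_one]
  ring

theorem norm_sub_mul_sum_inv_sub_div_sub_one_le {𝕜 : Type*} [RCLike 𝕜] {k n : ℕ}
    (hk1 : 1 ≤ k) (hk : k ≤ n) {z : ℕ → 𝕜} {x m : 𝕜} {ε ρ R D : ℝ} (hρ : 0 < ρ) (hR : 0 < R)
    (hxm : ‖x - m‖ ≤ D) (hcluster : ∀ i < k, ‖z i - m‖ ≤ ε)
    (hnear : ∀ i < k, ρ ≤ ‖x - z i‖) (hrest : ∀ i, k ≤ i → i < n → R ≤ ‖x - z i‖) :
    ‖(x - m) * (∑ i ∈ range n, (x - z i)⁻¹) / k - 1‖ ≤ ε / ρ + n * D / R := by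
  have hk0 : (0 : ℝ) < k := by exact_mod_cast hk1
  have hD : 0 ≤ D := (norm_nonneg _).trans hxm
  have hcl : ‖∑ i ∈ range k, (z i - m) / (x - z i)‖ ≤ k * (ε / ρ) := by
    refine (norm_sum_le_of_le _ fun i hi => ?_).trans_eq (by rw [sum_const, card_range,
      nsmul_eq_mul])
    rw [norm_div]
    have hi := mem_range.1 hi
    exact div_le_div₀ ((norm_nonneg _).trans (hcluster i hi)) (hcluster i hi) hρ (hnear i hi)
  have hfar : ‖∑ i ∈ Ico k n, (x - z i)⁻¹‖ ≤ n / R := by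
    refine (norm_sum_le_of_le (n := fun _ => R⁻¹) _ fun i hi => ?_).trans ?_
    · obtain ⟨hki, hin⟩ := mem_Ico.1 hi
      rw [norm_inv]
      exact inv_anti₀ hR (hrest i hki hin)
    · rw [sum_const, Nat.card_Ico, nsmul_eq_mul, div_eq_mul_inv]
      gcongr
      exact_mod_cast Nat.sub_le n k
  have hk_ne : (k : 𝕜) ≠ 0 := Nat.cast_ne_zero.2 (by omega)
  have hxz : ∀ i < k, x ≠ z i := fun i hi =>
    sub_ne_zero.1 (norm_pos_iff.1 (hρ.trans_le (hnear i hi)))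
  rw [div_sub_one hk_ne, sub_mul_sum_inv_sub_sub_natCast hk hxz, norm_div, RCLike.norm_natCast,
    div_le_iff₀ hk0]
  calc _ ≤ k * (ε / ρ) + D * (n / R) :=
        (norm_add_le _ _).trans (add_le_add hcl (norm_mul_le_of_le hxm hfar))
    _ = k * (ε / ρ) + n * D / R := by ring
    _ ≤ (ε / ρ + n * D / R) * k := by
        have : 0 ≤ n * D / R := by positivity
        have : (1 : ℝ) ≤ k := by exact_mod_cast hk1
        nlinarith

theorem norm_sub_div_le_of_norm_mul_div_sub_one_le {K : Type*} [NormedField K] {d q c : K}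
    {ε : ℝ} (h : ‖d * q / c - 1‖ ≤ ε) (hε : ε ≤ 1 / 2) :
    ‖d - c / q‖ ≤ 2 * ε * ‖d‖ := by
  set u := d * q / c
  have hu : 1 / 2 ≤ ‖u‖ := by
    have := norm_sub_norm_le (1 : K) (1 - u)
    rw [sub_sub_cancel, norm_one, norm_sub_rev] at this
    linarith
  have hu0 : u ≠ 0 := norm_pos_iff.1 (by linarith)
  have hc : c ≠ 0 := by rintro rfl; simp [u] at hu0
  have hq : q ≠ 0 := by rintro rfl; simp [u] at hu0
  have hd : d ≠ 0 := by rintro rfl; simp [u] at hu0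
  have hdu : d - c / q = d * (u - 1) / u := by
    simp only [u]
    field_simp
  rw [hdu, norm_div, norm_mul, div_le_iff₀ (by linarith)]
  have hε0 : 0 ≤ ε * ‖d‖ := mul_nonneg ((norm_nonneg _).trans h) (norm_nonneg d)
  calc ‖d‖ * ‖u - 1‖ ≤ ε * ‖d‖ * 1 := by rw [mul_one, mul_comm]; gcongr
    _ ≤ ε * ‖d‖ * (2 * ‖u‖) := by gcongr; linarith
    _ = 2 * ε * ‖d‖ * ‖u‖ := by ring

theorem newton_step_estimate_general (n : ℕ) (a : ℂ) (ha : a ≠ 0) (z : ℕ → ℂ)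
    (F : Polynomial ℂ)
    (hF : F = Polynomial.C a * ∏ i ∈ Finset.range n, (Polynomial.X - Polynomial.C (z i)))
    (k : ℕ) (hk1 : 1 ≤ k) (hk : k ≤ n)
    (m'' x : ℂ) (r : ℝ) (hr : 0 < r) (N : ℝ) (hN : 1 ≤ N)
    (hx : ‖x - m''‖ ≤ 4 * r)
    (hcluster : ∀ i, i < k → ‖z i - m''‖ ≤ r / (2 ^ 20 * n * N))
    (hfar : ∀ i, i < k → r / (27 * n) ≤ ‖x - z i‖)
    (hrest : ∀ i, k ≤ i → i < n → 2 ^ 19 * n ^ 2 * N * r ≤ ‖x - z i‖) :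
    F.eval x ≠ 0 ∧ (Polynomial.derivative F).eval x ≠ 0 ∧
    ‖(x - m'') * (Polynomial.derivative F).eval x / ((k : ℂ) * F.eval x) - 1‖ ≤
      1 / (2 ^ 14 * N) ∧
    ‖(x - (k : ℂ) * F.eval x / (Polynomial.derivative F).eval x) - m''‖ ≤
      r / (2 ^ 11 * N) := by
  have hn : (1 : ℝ) ≤ n := by exact_mod_cast hk1.trans hk
  have hxz : ∀ i ∈ range n, x ≠ z i := by
    intro i hi
    rw [← sub_ne_zero, ← norm_pos_iff]
    rcases lt_or_ge i k with hik | hik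
    · exact lt_of_lt_of_le (by positivity) (hfar i hik)
    · exact lt_of_lt_of_le (by positivity) (hrest i hik (mem_range.1 hi))
  set S := ∑ i ∈ range n, (x - z i)⁻¹
  have hF0 : F.eval x ≠ 0 := by
    simp only [hF, eval_mul, eval_C, eval_prod, eval_sub, eval_X]
    exact mul_ne_zero ha (prod_ne_zero_iff.2 fun i hi => sub_ne_zero.2 (hxz i hi))
  have hF' : (derivative F).eval x = F.eval x * S := by
    rw [hF, derivative_C_mul, eval_mul, eval_mul, eval_C, eval_derivative_prod_X_sub_C hxz,
      mul_assoc]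
  have hbound : r / (2 ^ 20 * n * N) / (r / (27 * n)) + n * (4 * r) / (2 ^ 19 * n ^ 2 * N * r) ≤
      1 / (2 ^ 14 * N) := by
    field_simp
    nlinarith
  have hu : ‖(x - m'') * S / k - 1‖ ≤ 1 / (2 ^ 14 * N) :=
    (norm_sub_mul_sum_inv_sub_div_sub_one_le hk1 hk (by positivity) (by positivity) hx hcluster
      hfar hrest).trans hbound
  have hε_half : 1 / (2 ^ 14 * N) ≤ 1 / 2 := by
    gcongr
    nlinarith
  have hS : S ≠ 0 := by
    intro hS0
    rw [hS0, mul_zero, zero_div, zero_sub, norm_neg, norm_one] at hu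
    linarith
  refine ⟨hF0, hF' ▸ mul_ne_zero hF0 hS, ?_, ?_⟩
  · convert hu using 3
    rw [hF']
    field_simp
  · have hnewton : x - k * F.eval x / (derivative F).eval x - m'' = (x - m'') - k / S := by
      rw [hF']
      field_simp
      ring
    calc _ = ‖(x - m'') - k / S‖ := by rw [hnewton]
      _ ≤ 2 * (1 / (2 ^ 14 * N)) * ‖x - m''‖ :=
        norm_sub_div_le_of_norm_mul_div_sub_one_le hu hε_half
      _ ≤ 2 * (1 / (2 ^ 14 * N)) * (4 * r) := by gcongr
      _ = r / (2 ^ 11 * N) := by field_simp; ring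

/-- **Quantitative Newton step towards a cluster** (key estimate in the proof of
Lemma `newtonsucceeds`): if the roots `z_1, …, z_k` of `F = a·∏ (X − z_i)` form a
cluster of radius `r/(2^{20}nN)` around `m''`, the point `x` is within distance `4r`
of `m''` but at distance at least `r/(27n)` from each of `z_1, …, z_k`, and all
remaining roots are at distance at least `2^{19}n²Nr` from `x`, then `F(x) ≠ 0`,
`F'(x) ≠ 0`, `|(x − m'')·F'(x)/(k·F(x)) − 1| ≤ 2^{−14}/N`, and the Newton iterate
`x' := x − k·F(x)/F'(x)` satisfies `|x' − m''| ≤ r/(2^{11}·N)`. -/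
theorem newton_step_estimate (n : ℕ) (hn : 2 ≤ n) (a : ℂ) (ha : a ≠ 0) (z : ℕ → ℂ)
    (F : Polynomial ℂ)
    (hF : F = Polynomial.C a * ∏ i ∈ Finset.range n, (Polynomial.X - Polynomial.C (z i)))
    (k : ℕ) (hk1 : 1 ≤ k) (hk : k ≤ n)
    (m'' x : ℂ) (r : ℝ) (hr : 0 < r) (N : ℝ) (hN : 1 ≤ N)
    (hx : ‖x - m''‖ ≤ 4 * r)
    (hcluster : ∀ i, i < k → ‖z i - m''‖ ≤ r / (2 ^ 20 * n * N))
    (hfar : ∀ i, i < k → r / (27 * n) ≤ ‖x - z i‖)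
    (hrest : ∀ i, k ≤ i → i < n → 2 ^ 19 * n ^ 2 * N * r ≤ ‖x - z i‖) :
    F.eval x ≠ 0 ∧ (Polynomial.derivative F).eval x ≠ 0 ∧
    ‖(x - m'') * (Polynomial.derivative F).eval x / ((k : ℂ) * F.eval x) - 1‖ ≤
      1 / (2 ^ 14 * N) ∧
    ‖(x - (k : ℂ) * F.eval x / (Polynomial.derivative F).eval x) - m''‖ ≤
      r / (2 ^ 11 * N) :=
  newton_step_estimate_general n a ha z F hF k hk1 hk m'' x r hr N hN hx hcluster hfar hrest
end
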